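/- arXiv:1401.5302 — 5 statements merged into one kernel-verified Lean document; each statement's English description precedes it below -/
import Mathlib

section
/- The relation ~_i on E_α defined by: x ~_i x' iff (1) x and x' agree on all arrows not being loops at i, (2) the subspace I_i(x) (the smallest x-stable subspace containing ⊕_{j≠i} V_j) is contained in ker(x_h − x'_h) for every loop h at i, and (3) the image of x_h − x'_h is contained in I_i(x) for every loop h at i, is an equivalence relation. -/
/- Setting: a quiver with vertex set `I`, arrows `Ω j k : j → k` (loops at `i` are `Ω i i`),
an `I`-graded vector space `V`, and the representation space
`E_α = ∀ j k, Ω j k → (V j →ₗ[ℂ] V k)`.  For `x ∈ E_α`, `IiSub Ω V i x` is the smallest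
`x`-stable `I`-graded subspace containing `⊕_{j ≠ i} V j` (its `i`-component is `I_i(x)`). -/

/-- The representation space `E_α`. -/
abbrev RepSpace {I : Type*} (Ω : I → I → Type*) (V : I → Type*)
    [∀ j, AddCommGroup (V j)] [∀ j, Module ℂ (V j)] :=
  ∀ j k : I, Ω j k → (V j →ₗ[ℂ] V k)

/-- A graded subspace `W` is stable under `x`. -/
def RepStable {I : Type*} (Ω : I → I → Type*) (V : I → Type*)
    [∀ j, AddCommGroup (V j)] [∀ j, Module ℂ (V j)]
    (x : RepSpace Ω V) (W : ∀ j, Submodule ℂ (V j)) : Prop :=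
  ∀ j k : I, ∀ h : Ω j k, ∀ v ∈ W j, x j k h v ∈ W k

/-- `I_i(x)`: the smallest `x`-stable graded subspace containing all `V j`, `j ≠ i`. -/
noncomputable def IiSub {I : Type*} (Ω : I → I → Type*) (V : I → Type*)
    [∀ j, AddCommGroup (V j)] [∀ j, Module ℂ (V j)]
    (i : I) (x : RepSpace Ω V) : ∀ j, Submodule ℂ (V j) :=
  sInf {W | RepStable Ω V x W ∧ ∀ j, j ≠ i → W j = ⊤}

/-- The relation `x ∼_i x'`. -/
def simRel {I : Type*} (Ω : I → I → Type*) (V : I → Type*)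
    [∀ j, AddCommGroup (V j)] [∀ j, Module ℂ (V j)]
    (i : I) (x x' : RepSpace Ω V) : Prop :=
  (∀ j k : I, ∀ h : Ω j k, ¬(j = i ∧ k = i) → x j k h = x' j k h) ∧
  (∀ h : Ω i i, ∀ v ∈ IiSub Ω V i x i, x i i h v = x' i i h v) ∧
  (∀ h : Ω i i, ∀ v : V i, x i i h v - x' i i h v ∈ IiSub Ω V i x i)

section Aux

variable {I : Type*} (Ω : I → I → Type*) (V : I → Type*)
    [∀ j, AddCommGroup (V j)] [∀ j, Module ℂ (V j)] (i : I)

lemma mem_IiSub (x : RepSpace Ω V) (j : I) (v : V j) :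
    v ∈ IiSub Ω V i x j ↔
      ∀ W ∈ {W | RepStable Ω V x W ∧ ∀ j, j ≠ i → W j = ⊤}, v ∈ W j := by
  rw [IiSub, sInf_apply]
  simp [Submodule.mem_iInf]

lemma IiSub_mem (x : RepSpace Ω V) :
    RepStable Ω V x (IiSub Ω V i x) ∧ ∀ j, j ≠ i → IiSub Ω V i x j = ⊤ := by
  constructor
  · intro j k h v hv
    rw [mem_IiSub] at hv ⊢
    exact fun W hW => hW.1 j k h v (hv W hW)
  · intro j hj
    refine le_antisymm le_top (fun v _ => ?_)
    rw [mem_IiSub]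
    exact fun W hW => (hW.2 j hj) ▸ trivial

lemma IiSub_le (x : RepSpace Ω V) (W : ∀ j, Submodule ℂ (V j))
    (hW : RepStable Ω V x W) (ht : ∀ j, j ≠ i → W j = ⊤) :
    IiSub Ω V i x ≤ W :=
  sInf_le ⟨hW, ht⟩

lemma IiSub_eq_of_simRel {x x' : RepSpace Ω V} (hx : simRel Ω V i x x') :
    IiSub Ω V i x = IiSub Ω V i x' := by
  obtain ⟨h1, h2, _h3⟩ := hx
  obtain ⟨hstab, htop⟩ := IiSub_mem Ω V i x
  obtain ⟨hstab', htop'⟩ := IiSub_mem Ω V i x'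
  have le1 : IiSub Ω V i x' ≤ IiSub Ω V i x := by
    refine IiSub_le Ω V i x' _ ?_ htop
    intro j k h v hv
    by_cases hc : j = i ∧ k = i
    · obtain ⟨rfl, rfl⟩ := hc
      rw [← h2 h v hv]
      exact hstab _ _ h v hv
    · rw [← h1 j k h hc]
      exact hstab j k h v hv
  refine le_antisymm ?_ le1
  refine IiSub_le Ω V i x _ ?_ htop'
  intro j k h v hv
  by_cases hc : j = i ∧ k = i
  · obtain ⟨rfl, rfl⟩ := hc
    rw [h2 h v (le1 _ hv)]
    exact hstab' _ _ h v hv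
  · rw [h1 j k h hc]
    exact hstab' j k h v hv

end Aux

/-- `∼_i` is an equivalence relation on `E_α`. -/
theorem simRel_equivalence {I : Type*} (Ω : I → I → Type*) (V : I → Type*)
    [∀ j, AddCommGroup (V j)] [∀ j, Module ℂ (V j)] (i : I) :
    Equivalence (simRel Ω V i) := by
  constructor
  · intro x
    refine ⟨fun _ _ _ _ => rfl, fun _ _ _ => rfl, fun h v => ?_⟩
    simp only [sub_self]; exact Submodule.zero_mem _
  · intro x y hxy
    have heq := IiSub_eq_of_simRel Ω V i hxy
    obtain ⟨h1, h2, h3⟩ := hxy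
    refine ⟨fun j k h hc => (h1 j k h hc).symm, fun h v hv => ?_, fun h v => ?_⟩
    · exact (h2 h v (by rw [heq]; exact hv)).symm
    · rw [← heq]
      have := Submodule.neg_mem _ (h3 h v)
      simpa using this
  · intro x y z hxy hyz
    have heq := IiSub_eq_of_simRel Ω V i hxy
    obtain ⟨h1, h2, h3⟩ := hxy
    obtain ⟨g1, g2, g3⟩ := hyz
    refine ⟨fun j k h hc => (h1 j k h hc).trans (g1 j k h hc), fun h v hv => ?_,
      fun h v => ?_⟩
    · exact (h2 h v hv).trans (g2 h v (by rw [← heq]; exact hv))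
    · have : x i i h v - z i i h v =
        (x i i h v - y i i h v) + (y i i h v - z i i h v) := by abel
      rw [this]
      exact Submodule.add_mem _ (h3 h v) (by rw [heq]; exact g3 h v)
end

section
/- For x ∈ E_α, the ~_i-equivalence class of x is an affine subspace of E_α of dimension ω_i · γ · (α_i − γ), where ω_i = |Ω(i)| is the number of loops at i and γ·i is the codimension of I_i(x) in V_α. -/
section Aux

variable {I : Type*} (Ω : I → I → Type*) (V : I → Type*)
    [∀ j, AddCommGroup (V j)] [∀ j, Module ℂ (V j)] (i : I) (x : RepSpace Ω V)

/-- Linear maps `V i → V i` vanishing on `I_i(x)` with range inside `I_i(x)`. -/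
noncomputable def WiiSub : Submodule ℂ (V i →ₗ[ℂ] V i) where
  carrier := {f | (∀ v ∈ IiSub Ω V i x i, f v = 0) ∧ ∀ v, f v ∈ IiSub Ω V i x i}
  add_mem' := by
    rintro f g ⟨hf1, hf2⟩ ⟨hg1, hg2⟩
    exact ⟨fun v hv => by simp [hf1 v hv, hg1 v hv],
      fun v => by simpa using add_mem (hf2 v) (hg2 v)⟩
  zero_mem' := ⟨fun v _ => rfl, fun v => by simpa using Submodule.zero_mem _⟩
  smul_mem' := by
    rintro c f ⟨hf1, hf2⟩
    exact ⟨fun v hv => by simp [hf1 v hv],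
      fun v => by simpa using Submodule.smul_mem _ c (hf2 v)⟩

/-- The direction of the affine subspace: differences supported on loops at `i`,
vanishing on `I_i(x)` with range inside `I_i(x)`. -/
noncomputable def Sdir : Submodule ℂ (RepSpace Ω V) where
  carrier := {d | (∀ j k : I, ∀ h : Ω j k, ¬(j = i ∧ k = i) → d j k h = 0) ∧
    (∀ h : Ω i i, ∀ v ∈ IiSub Ω V i x i, d i i h v = 0) ∧
    (∀ h : Ω i i, ∀ v : V i, d i i h v ∈ IiSub Ω V i x i)}
  add_mem' := by
    rintro a b ⟨ha1, ha2, ha3⟩ ⟨hb1, hb2, hb3⟩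
    refine ⟨fun j k h hjk => ?_, fun h v hv => ?_, fun h v => ?_⟩
    · show a j k h + b j k h = 0
      rw [ha1 j k h hjk, hb1 j k h hjk, add_zero]
    · show (a i i h + b i i h) v = 0
      simp [ha2 h v hv, hb2 h v hv]
    · show (a i i h + b i i h) v ∈ _
      simpa using add_mem (ha3 h v) (hb3 h v)
  zero_mem' := ⟨fun _ _ _ _ => rfl, fun _ _ _ => rfl,
    fun _ v => by simpa using Submodule.zero_mem _⟩
  smul_mem' := by
    rintro c a ⟨ha1, ha2, ha3⟩
    refine ⟨fun j k h hjk => ?_, fun h v hv => ?_, fun h v => ?_⟩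
    · show c • a j k h = 0
      rw [ha1 j k h hjk, smul_zero]
    · show (c • a i i h) v = 0
      simp [ha2 h v hv]
    · show (c • a i i h) v ∈ _
      simpa using Submodule.smul_mem _ c (ha3 h v)

lemma mem_Sdir {d : RepSpace Ω V} :
    d ∈ Sdir Ω V i x ↔ (∀ j k : I, ∀ h : Ω j k, ¬(j = i ∧ k = i) → d j k h = 0) ∧
    (∀ h : Ω i i, ∀ v ∈ IiSub Ω V i x i, d i i h v = 0) ∧
    (∀ h : Ω i i, ∀ v : V i, d i i h v ∈ IiSub Ω V i x i) := Iff.rfl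

lemma mem_Wii {f : V i →ₗ[ℂ] V i} :
    f ∈ WiiSub Ω V i x ↔ (∀ v ∈ IiSub Ω V i x i, f v = 0) ∧
      ∀ v, f v ∈ IiSub Ω V i x i := Iff.rfl

open Classical in
/-- Place a family of loop maps at position `(i, i)` and `0` elsewhere. -/
noncomputable def place (g : Ω i i → (V i →ₗ[ℂ] V i)) : RepSpace Ω V := fun j k =>
  if hj : j = i then (if hk : k = i then by subst hj; subst hk; exact g else 0) else 0

lemma place_self (g : Ω i i → (V i →ₗ[ℂ] V i)) : place Ω V i g i i = g := by
  simp [place]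

lemma place_ne (g : Ω i i → (V i →ₗ[ℂ] V i)) (j k : I) (hjk : ¬(j = i ∧ k = i)) :
    place Ω V i g j k = 0 := by
  simp only [place]
  by_cases hj : j = i
  · rw [dif_pos hj]
    by_cases hk : k = i
    · exact absurd ⟨hj, hk⟩ hjk
    · rw [dif_neg hk]
  · rw [dif_neg hj]

/-- The forward map from the direction submodule to the loop data. -/
noncomputable def toLoops : Sdir Ω V i x →ₗ[ℂ] (Ω i i → WiiSub Ω V i x) where
  toFun d h := ⟨d.1 i i h, fun v hv => d.2.2.1 h v hv, fun v => d.2.2.2 h v⟩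
  map_add' a b := by funext h; ext v; rfl
  map_smul' c a := by funext h; ext v; rfl

noncomputable def loopsEquiv : Sdir Ω V i x ≃ₗ[ℂ] (Ω i i → WiiSub Ω V i x) := by
  refine LinearEquiv.ofBijective (toLoops Ω V i x) ⟨?_, ?_⟩
  · intro a b hab
    apply Subtype.ext
    funext j k h
    by_cases hjk : j = i ∧ k = i
    · obtain ⟨rfl, rfl⟩ := hjk
      exact congrArg Subtype.val (congrFun hab h)
    · rw [a.2.1 j k h hjk, b.2.1 j k h hjk]
  · intro g
    refine ⟨⟨place Ω V i (fun h => (g h).1), ?_, ?_, ?_⟩, ?_⟩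
    · intro j k h hjk
      rw [place_ne Ω V i _ j k hjk]; rfl
    · intro h v hv
      rw [place_self]; exact (g h).2.1 v hv
    · intro h v
      rw [place_self]; exact (g h).2.2 v
    · funext h
      ext : 1
      show place Ω V i (fun h => (g h).1) i i h = (g h).1
      rw [place_self]

/-- `W_ii ≃ Hom(V_i / I_i(x), I_i(x))`. -/
noncomputable def wiiEquiv :
    WiiSub Ω V i x ≃ₗ[ℂ] ((V i ⧸ IiSub Ω V i x i) →ₗ[ℂ] IiSub Ω V i x i) where
  toFun f := (IiSub Ω V i x i).liftQ
    (LinearMap.codRestrict (IiSub Ω V i x i) f.1 f.2.2)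
    (fun v hv => by
      rw [LinearMap.mem_ker]
      ext
      simpa using f.2.1 v hv)
  invFun g := ⟨(IiSub Ω V i x i).subtype ∘ₗ g ∘ₗ (IiSub Ω V i x i).mkQ,
    fun v hv => by simp [(Submodule.Quotient.mk_eq_zero _).2 hv],
    fun v => by simp⟩
  map_add' a b := by
    apply Submodule.linearMap_qext
    ext v
    simp
  map_smul' c a := by
    apply Submodule.linearMap_qext
    ext v
    simp
  left_inv f := by
    ext v
    simp
  right_inv g := by
    apply Submodule.linearMap_qext
    ext v
    simp

end Aux
/-- the `∼_i`-equivalence class of `x` is an affine subspace of `E_α` of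
dimension `ω_i · γ · (α_i − γ)`, where `ω_i` is the number of loops at `i`,
`α_i = dim V_i`, and `γ = codim_{V_i} I_i(x)_i`. -/

theorem simRel_class_affine {I : Type*} (Ω : I → I → Type*) (V : I → Type*)
    [∀ j, AddCommGroup (V j)] [∀ j, Module ℂ (V j)]
    [∀ j, FiniteDimensional ℂ (V j)] [∀ j k, Fintype (Ω j k)]
    (i : I) (x : RepSpace Ω V) :
    ∃ A : AffineSubspace ℂ (RepSpace Ω V),
      (A : Set (RepSpace Ω V)) = {x' | simRel Ω V i x x'} ∧
      Module.finrank ℂ A.direction =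
        Fintype.card (Ω i i) *
          (Module.finrank ℂ (V i) - Module.finrank ℂ (IiSub Ω V i x i)) *
          (Module.finrank ℂ (V i) -
            (Module.finrank ℂ (V i) - Module.finrank ℂ (IiSub Ω V i x i))) := by
  classical
  refine ⟨AffineSubspace.mk' x (Sdir Ω V i x), ?_, ?_⟩
  · ext x'
    rw [AffineSubspace.mem_coe, AffineSubspace.mem_mk', vsub_eq_sub,
      mem_Sdir]
    constructor
    · rintro ⟨h1, h2, h3⟩
      refine ⟨fun j k h hjk => ?_, fun h v hv => ?_, fun h v => ?_⟩
      · have h' : x' j k h - x j k h = 0 := h1 j k h hjk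
        rw [sub_eq_zero] at h'
        exact h'.symm
      · have h' : x' i i h v - x i i h v = 0 := h2 h v hv
        rw [sub_eq_zero] at h'
        exact h'.symm
      · have h' : x' i i h v - x i i h v ∈ IiSub Ω V i x i := h3 h v
        simpa [neg_sub] using neg_mem h'
    · rintro ⟨h1, h2, h3⟩
      refine ⟨fun j k h hjk => ?_, fun h v hv => ?_, fun h v => ?_⟩
      · show x' j k h - x j k h = 0
        rw [h1 j k h hjk, sub_self]
      · show x' i i h v - x i i h v = 0
        rw [← h2 h v hv, sub_self]
      · show x' i i h v - x i i h v ∈ IiSub Ω V i x i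
        simpa [neg_sub] using neg_mem (h3 h v)
  · rw [AffineSubspace.direction_mk']
    have e := (loopsEquiv Ω V i x).trans
      (LinearEquiv.piCongrRight fun _ => wiiEquiv Ω V i x)
    rw [e.finrank_eq, Module.finrank_pi_fintype, Finset.sum_const, Finset.card_univ,
      smul_eq_mul, Module.finrank_linearMap]
    have hq := Submodule.finrank_quotient_add_finrank (IiSub Ω V i x i)
    have hb : Module.finrank ℂ (IiSub Ω V i x i) ≤ Module.finrank ℂ (V i) :=
      Submodule.finrank_le _
    have h1 : Module.finrank ℂ (V i) - Module.finrank ℂ (IiSub Ω V i x i) =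
        Module.finrank ℂ (V i ⧸ IiSub Ω V i x i) := by omega
    have h2 : Module.finrank ℂ (V i) -
        (Module.finrank ℂ (V i) - Module.finrank ℂ (IiSub Ω V i x i)) =
        Module.finrank ℂ (IiSub Ω V i x i) := by omega
    rw [h2, h1, mul_assoc]
end

section
/- Let F be the free ℚ(v)-algebra on generators E_{i,l} for (i,l) ∈ I_∞, graded by deg E_{i,l} = l·i ∈ ℕI. Equip F⊗F with the twisted multiplication (a⊗b)(c⊗d) = v^{(|b|,|c|)} ac ⊗ bd, and define the algebra morphism δ: F → F⊗F by δ(E_{i,l}) = Σ_{t+t'=l} v_i^{t t'} E_{i,t} ⊗ E_{i,t'}. Then for any choice of scalars ν_ι (ι ∈ I_∞), there exists a unique bilinear form ⟨−,−⟩ on F such that: ⟨x,y⟩ = 0 if |x| ≠ |y|, ⟨E_ι, E_ι⟩ = ν_ι, and ⟨ab, c⟩ = ⟨a⊗b, δ(c)⟩, where the form on F⊗F is ⟨a⊗b, c⊗d⟩ = ⟨a,c⟩⟨b,d⟩. -/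
/- Setting for the generalized quantum group: `I` is the vertex set of a quiver with loops,
`ω i` the number of loops at `i` (`i` is real iff `ω i = 0`), `e` the symmetric Euler form
with `e i i = 2 - 2 ω i`.  `I_∞ = (I^re × {1}) ∪ (I^im × ℕ_{≥1})` is the set of generators,
`F` is the free `ℚ(v)`-algebra on the generators `E_{i,l}` (`(i,l) ∈ I_∞`), realized as the
monoid algebra of the free monoid on `I_∞`.  `F ⊗ F` carries the twisted multiplication
`(a⊗b)(c⊗d) = v^{(|b|,|c|)} ac ⊗ bd`, and `δ : F → F ⊗ F` is the algebra morphism with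
`δ(E_{i,l}) = Σ_{t+t'=l} v_i^{tt'} E_{i,t} ⊗ E_{i,t'}` (`v_i = v^{(i,i)/2} = v^{1-ω i}`). -/

open scoped Classical

noncomputable section

/-- The base field `ℚ(v)`. -/
abbrev Kv : Type := RatFunc ℚ

/-- The variable `v`. -/
def vq : Kv := RatFunc.X

variable {I : Type} [DecidableEq I]

/-- The index set `I_∞`: pairs `(i,l)` with `l ≥ 1`, and `l = 1` if `i` is real. -/
def GenI (ω : I → ℕ) : Type := {p : I × ℕ // 1 ≤ p.2 ∧ (ω p.1 = 0 → p.2 = 1)}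

/-- The free algebra `F` on the generators `E_ι`, `ι ∈ I_∞`, as a monoid algebra. -/
abbrev FA (ω : I → ℕ) : Type := MonoidAlgebra Kv (FreeMonoid (GenI ω))

/-- The monomial of `F` attached to a word in the generators. -/
def sw (ω : I → ℕ) (w : List (GenI ω)) : FA ω :=
  MonoidAlgebra.single (FreeMonoid.ofList w) (1 : Kv)

/-- The weight (degree in `ℕI`) of a word. -/
def wtw (ω : I → ℕ) (w : List (GenI ω)) : I → ℕ := fun i =>
  ((w.filter (fun g => g.1.1 = i)).map (fun g => g.1.2)).sum

/-- `F ⊗ F` as a module: formal linear combinations of pairs of words. -/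
abbrev TT (ω : I → ℕ) : Type := (List (GenI ω) × List (GenI ω)) →₀ Kv

/-- The Euler pairing `(|u|, |w|)` of the weights of two words. -/
def eWt (ω : I → ℕ) (e : I → I → ℤ) (u w : List (GenI ω)) : ℤ :=
  (u.map (fun g => (w.map (fun g' => (g.1.2 : ℤ) * (g'.1.2 : ℤ) * e g.1.1 g'.1.1)).sum)).sum

/-- The twisted multiplication on `F ⊗ F`:
`(a⊗b)(c⊗d) = v^{(|b|,|c|)} ac ⊗ bd`. -/
def tmul (ω : I → ℕ) (e : I → I → ℤ) (f h : TT ω) : TT ω :=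
  f.sum fun p a => h.sum fun q b =>
    Finsupp.single (p.1 ++ q.1, p.2 ++ q.2) (a * b * vq ^ (eWt ω e p.2 q.1))

/-- The word representing `E_{i,t}` (empty if `t = 0`), built from a generator `g = (i,l)`
with `t ≤ l`. -/
def mkw (ω : I → ℕ) (g : GenI ω) (t : ℕ) (ht : t ≤ g.1.2) : List (GenI ω) :=
  if h1 : 1 ≤ t then
    [⟨(g.1.1, t), h1, fun h0 => le_antisymm (ht.trans_eq (g.2.2 h0)) h1⟩]
  else []

/-- `δ(E_{i,l}) = Σ_{t+t'=l} v_i^{t t'} E_{i,t} ⊗ E_{i,t'}`, with `v_i = v^{1-ω i}`. -/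
def deltaGen (ω : I → ℕ) (g : GenI ω) : TT ω :=
  ∑ t ∈ (Finset.range (g.1.2 + 1)).attach,
    (vq ^ ((1 - (ω g.1.1 : ℤ)) * (t.1 : ℤ) * ((g.1.2 : ℤ) - (t.1 : ℤ)))) •
      Finsupp.single
        (mkw ω g t.1 (Nat.le_of_lt_succ (Finset.mem_range.mp t.2)),
         mkw ω g (g.1.2 - t.1) (Nat.sub_le _ _)) (1 : Kv)

/-- `δ` on words: the product (in the twisted algebra `F ⊗ F`) of the `δ` of the letters. -/
def deltaWord (ω : I → ℕ) (e : I → I → ℤ) : List (GenI ω) → TT ω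
  | [] => Finsupp.single ([], []) 1
  | g :: w => tmul ω e (deltaGen ω g) (deltaWord ω e w)

/-- The comultiplication `δ : F → F ⊗ F` (linear extension). -/
def deltaF (ω : I → ℕ) (e : I → I → ℤ) (c : FA ω) : TT ω :=
  c.coeff.sum fun w a => a • deltaWord ω e (FreeMonoid.toList w)

/-- The axioms of the Hopf pairing `⟨-,-⟩` on `F` attached to the family `ν`:
`⟨1,1⟩ = 1`; `⟨x,y⟩ = 0` for homogeneous `x, y` of different weights; `⟨E_ι,E_ι⟩ = ν_ι`;
`⟨ab, c⟩ = ⟨a ⊗ b, δ(c)⟩` and `⟨a, bc⟩ = ⟨δ(a), b ⊗ c⟩`, where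
`⟨a⊗b, c⊗d⟩ = ⟨a,c⟩⟨b,d⟩`. -/
def PairingAxioms (ω : I → ℕ) (e : I → I → ℤ) (ν : GenI ω → Kv)
    (B : FA ω →ₗ[Kv] FA ω →ₗ[Kv] Kv) : Prop :=
  B 1 1 = 1 ∧
  (∀ w w' : List (GenI ω), wtw ω w ≠ wtw ω w' → B (sw ω w) (sw ω w') = 0) ∧
  (∀ g : GenI ω, B (sw ω [g]) (sw ω [g]) = ν g) ∧
  (∀ a b c : FA ω,
    B (a * b) c = (deltaF ω e c).sum fun p coeff =>
      coeff * B a (sw ω p.1) * B b (sw ω p.2)) ∧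
  (∀ a b c : FA ω,
    B a (b * c) = (deltaF ω e a).sum fun p coeff =>
      coeff * B (sw ω p.1) b * B (sw ω p.2) c)

end

/-! The pairing of words is defined by recursion on the left word through
`⟨E_g u, w⟩ = ⟨E_g ⊗ u, δ(w)⟩`, with `⟨E_{i,n}, w⟩` given in closed form: it vanishes unless
`w` is a word in the letters `E_{i,t}`, and is then a product of the `ν`'s and a power of `v`.
The left Hopf identity `⟨uw, w'⟩ = ⟨u ⊗ w, δ(w')⟩` for all words follows from coassociativity
of `δ`, which only has to be checked on a generator, since `(δ ⊗ 1) δ` and `(1 ⊗ δ) δ` are both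
multiplicative for the twisted product of `F ⊗ F ⊗ F`. The right Hopf identity
`⟨w, uw'⟩ = ⟨δ(w), u ⊗ w'⟩` holds for a single letter by the closed form, and is multiplicative
in `w` by the left identity, since nonzero pairings only occur between words of equal weight.
The form is then extended bilinearly from the basis of words. Conversely the axioms force the
same recursion on words, which gives uniqueness. -/

noncomputable section

open Finset.HasAntidiagonal

namespace HopfPairing

section WeightedSum

variable {α β : Type*}

def wsum (f : α →₀ Kv) (k : α → Kv) : Kv := f.sum fun p c => c * k p

@[simp] lemma wsum_zero (k : α → Kv) : wsum 0 k = 0 := Finsupp.sum_zero_index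

@[simp] lemma wsum_single (a : α) (c : Kv) (k : α → Kv) :
    wsum (Finsupp.single a c) k = c * k a :=
  Finsupp.sum_single_index (zero_mul _)

lemma wsum_add (f g : α →₀ Kv) (k : α → Kv) : wsum (f + g) k = wsum f k + wsum g k :=
  Finsupp.sum_add_index' (fun _ => zero_mul _) fun _ _ _ => add_mul _ _ _

lemma wsum_smul (c : Kv) (f : α →₀ Kv) (k : α → Kv) : wsum (c • f) k = c * wsum f k := by
  rw [wsum, wsum, Finsupp.sum_smul_index (fun _ => zero_mul _), Finsupp.mul_sum]
  exact Finsupp.sum_congr fun _ _ => mul_assoc _ _ _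

lemma wsum_finsetSum (s : Finset β) (f : β → α →₀ Kv) (k : α → Kv) :
    wsum (∑ b ∈ s, f b) k = ∑ b ∈ s, wsum (f b) k :=
  (Finsupp.sum_finsetSum_index (fun _ => zero_mul _) fun _ _ _ => add_mul _ _ _).symm

lemma wsum_sum (f : β →₀ Kv) (g : β → Kv → α →₀ Kv) (k : α → Kv) :
    wsum (f.sum g) k = f.sum fun b c => wsum (g b c) k :=
  wsum_finsetSum _ _ _

lemma wsum_congr {f : α →₀ Kv} {k k' : α → Kv} (h : ∀ p ∈ f.support, k p = k' p) :
    wsum f k = wsum f k' :=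
  Finsupp.sum_congr fun p hp => by rw [h p hp]

lemma wsum_eq_zero {f : α →₀ Kv} {k : α → Kv} (h : ∀ p ∈ f.support, k p = 0) : wsum f k = 0 :=
  (wsum_congr h).trans (by simp [wsum])

lemma mul_wsum (c : Kv) (f : α →₀ Kv) (k : α → Kv) :
    c * wsum f k = wsum f fun p => c * k p := by
  rw [wsum, Finsupp.mul_sum]
  exact Finsupp.sum_congr fun _ _ => mul_left_comm _ _ _

lemma wsum_mul (c : Kv) (f : α →₀ Kv) (k : α → Kv) :
    wsum f k * c = wsum f fun p => k p * c := by
  rw [mul_comm, mul_wsum]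
  exact wsum_congr fun _ _ => mul_comm _ _

lemma wsum_comm (f : α →₀ Kv) (g : β →₀ Kv) (k : α → β → Kv) :
    wsum f (fun p => wsum g (k p)) = wsum g fun q => wsum f fun p => k p q := by
  simp only [wsum, Finsupp.mul_sum]
  rw [Finsupp.sum_comm]
  exact Finsupp.sum_congr fun _ _ => Finsupp.sum_congr fun _ _ => mul_left_comm _ _ _

lemma wsum_mul_wsum (f : α →₀ Kv) (g : β →₀ Kv) (k : α → Kv) (k' : β → Kv) :
    wsum f k * wsum g k' = wsum f fun p => wsum g fun q => k p * k' q := by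
  rw [wsum_mul]
  exact wsum_congr fun p _ => by rw [mul_wsum]

lemma sum_mul_mul_eq_wsum (f : α →₀ Kv) (x y : α → Kv) :
    (f.sum fun p c => c * x p * y p) = wsum f fun p => x p * y p :=
  Finsupp.sum_congr fun _ _ => mul_assoc _ _ _

end WeightedSum

section Antidiagonal

variable {M : Type*} [AddCommMonoid M]

lemma sum_antidiagonal_assoc (n : ℕ) (f : ℕ → ℕ → ℕ → M) :
    ∑ p ∈ antidiagonal n, ∑ q ∈ antidiagonal p.2, f p.1 q.1 q.2 =
      ∑ p ∈ antidiagonal n, ∑ q ∈ antidiagonal p.1, f q.1 q.2 p.2 := by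
  rw [Finset.sum_sigma', Finset.sum_sigma']
  refine Finset.sum_nbij' (fun x => ⟨(x.1.1 + x.2.1, x.2.2), (x.1.1, x.2.1)⟩)
    (fun y => ⟨(y.2.1, y.2.2 + y.1.2), (y.2.2, y.1.2)⟩) ?_ ?_ ?_ ?_ ?_ <;>
  rintro ⟨⟨a, b⟩, ⟨c, d⟩⟩ h <;> simp_all [mem_antidiagonal] <;> omega

lemma sum_antidiagonal_ite_le_fst {k n : ℕ} (h : k ≤ n) (f : ℕ → ℕ → M) :
    ∑ p ∈ antidiagonal n, (if k ≤ p.1 then f (p.1 - k) p.2 else 0) =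
      ∑ p ∈ antidiagonal (n - k), f p.1 p.2 := by
  rw [← Finset.sum_filter, Finset.Nat.antidiagonal_filter_le_fst_of_le h, Finset.sum_map]
  simp

end Antidiagonal

section Counit

variable {α : Type*}

def counit (x : List α) : Kv := if x = [] then 1 else 0

@[simp] lemma counit_nil : counit ([] : List α) = 1 := if_pos rfl

@[simp] lemma counit_cons (a : α) (x : List α) : counit (a :: x) = 0 :=
  if_neg (List.cons_ne_nil a x)

lemma counit_append (x y : List α) : counit (x ++ y) = counit x * counit y := by
  cases x <;> simp

end Counit

lemma vq_ne_zero : vq ≠ 0 := RatFunc.X_ne_zero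

variable {I : Type} {ω : I → ℕ} (e : I → I → ℤ) (ν : GenI ω → Kv)

section EulerForm

@[simp] lemma eWt_nil_left (w : List (GenI ω)) : eWt ω e [] w = 0 := rfl

@[simp] lemma eWt_nil_right (u : List (GenI ω)) : eWt ω e u [] = 0 := by
  simp [eWt]

lemma eWt_append_left (u u' w : List (GenI ω)) :
    eWt ω e (u ++ u') w = eWt ω e u w + eWt ω e u' w := by
  simp [eWt]

lemma eWt_append_right (u w w' : List (GenI ω)) :
    eWt ω e u (w ++ w') = eWt ω e u w + eWt ω e u w' := by
  simp only [eWt, List.map_append, List.sum_append, ← List.sum_map_add]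

lemma eWt_eq_sum_map (u w : List (GenI ω)) :
    eWt ω e u w = (u.map fun g => (g.1.2 : ℤ) *
      (w.map fun g' => (g'.1.2 : ℤ) * e g.1.1 g'.1.1).sum).sum := by
  simp only [eWt, ← List.sum_map_mul_left, mul_assoc]

lemma eWt_comm (hsym : ∀ i j, e i j = e j i) (u w : List (GenI ω)) :
    eWt ω e u w = eWt ω e w u := by
  induction u with
  | nil => simp [eWt]
  | cons g u ih =>
    rw [← List.singleton_append, eWt_append_left, eWt_append_right, ih]
    simp only [eWt, List.map_cons, List.map_nil, List.sum_cons, List.sum_nil, add_zero]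
    congr 1
    exact congrArg List.sum (List.map_congr_left fun g' _ => by rw [hsym]; ring)

end EulerForm

section Comultiplication

/-- The word `E_{i,t}` for `g = (i, l)`: empty for `t = 0` (as `E_{i,0} = 1`) and, unlike `mkw`,
also for `t > l`. -/
def genWord (g : GenI ω) (t : ℕ) : List (GenI ω) :=
  if h : 1 ≤ t ∧ t ≤ g.1.2 then
    [⟨(g.1.1, t), h.1, fun h0 => le_antisymm (h.2.trans_eq (g.2.2 h0)) h.1⟩]
  else []

lemma mkw_eq_genWord (g : GenI ω) (t : ℕ) (ht : t ≤ g.1.2) : mkw ω g t ht = genWord g t := by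
  by_cases h1 : 1 ≤ t
  · rw [mkw, genWord, dif_pos h1, dif_pos ⟨h1, ht⟩]
  · rw [mkw, genWord, dif_neg h1, dif_neg fun h => h1 h.1]

@[simp] lemma genWord_zero (g : GenI ω) : genWord g 0 = [] := by
  simp [genWord]

@[simp] lemma genWord_self (g : GenI ω) : genWord g g.1.2 = [g] := by
  rw [genWord, dif_pos ⟨g.2.1, le_rfl⟩]
  rfl

lemma genWord_eq_singleton {g : GenI ω} {t : ℕ} (h1 : 1 ≤ t) (ht : t ≤ g.1.2) :
    ∃ h : GenI ω, h.1 = (g.1.1, t) ∧ genWord g t = [h] :=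
  ⟨_, rfl, dif_pos ⟨h1, ht⟩⟩

lemma genWord_eq_nil_iff {g : GenI ω} {t : ℕ} (ht : t ≤ g.1.2) : genWord g t = [] ↔ t = 0 := by
  by_cases h1 : 1 ≤ t
  · obtain ⟨h, -, hg⟩ := genWord_eq_singleton h1 ht
    rw [hg]
    exact iff_of_false (List.cons_ne_nil _ _) (by omega)
  · obtain rfl : t = 0 := by omega
    exact iff_of_true (genWord_zero g) rfl

lemma genWord_congr {g h : GenI ω} (hgh : g.1.1 = h.1.1) {t : ℕ} (htg : t ≤ g.1.2)
    (hth : t ≤ h.1.2) : genWord g t = genWord h t := by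
  unfold genWord
  by_cases h1 : 1 ≤ t
  · rw [dif_pos ⟨h1, htg⟩, dif_pos ⟨h1, hth⟩]
    exact congrArg (· :: []) (Subtype.ext (Prod.ext hgh rfl))
  · rw [dif_neg fun h => h1 h.1, dif_neg fun h => h1 h.1]

lemma wsum_deltaGen (g : GenI ω) (k : List (GenI ω) × List (GenI ω) → Kv) :
    wsum (deltaGen ω g) k = ∑ p ∈ antidiagonal g.1.2,
      vq ^ ((1 - (ω g.1.1 : ℤ)) * p.1 * p.2) * k (genWord g p.1, genWord g p.2) := by
  rw [deltaGen, wsum_finsetSum, Finset.Nat.sum_antidiagonal_eq_sum_range_succ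
    (fun a b : ℕ => vq ^ ((1 - (ω g.1.1 : ℤ)) * a * b) * k (genWord g a, genWord g b)),
    ← Finset.sum_attach (Finset.range (g.1.2 + 1))]
  refine Finset.sum_congr rfl fun t _ => ?_
  have ht := Nat.le_of_lt_succ (Finset.mem_range.mp t.2)
  rw [wsum_smul, wsum_single, one_mul, mkw_eq_genWord, mkw_eq_genWord, Nat.cast_sub ht]

lemma mem_support_deltaGen {g : GenI ω} {p : List (GenI ω) × List (GenI ω)}
    (hp : p ∈ (deltaGen ω g).support) :
    ∃ q ∈ antidiagonal g.1.2, p = (genWord g q.1, genWord g q.2) := by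
  obtain ⟨t, -, hmem⟩ := Finset.mem_biUnion.mp (Finsupp.support_finsetSum hp)
  have ht := Nat.le_of_lt_succ (Finset.mem_range.mp t.2)
  refine ⟨(t.1, g.1.2 - t.1), mem_antidiagonal.mpr (Nat.add_sub_cancel' ht), ?_⟩
  rw [Finset.mem_singleton.mp (Finsupp.support_single_subset (Finsupp.support_smul hmem)),
    mkw_eq_genWord, mkw_eq_genWord]

lemma mem_support_tmul {f h : TT ω} {p : List (GenI ω) × List (GenI ω)}
    (hp : p ∈ (tmul ω e f h).support) :
    ∃ a ∈ f.support, ∃ b ∈ h.support, p = (a.1 ++ b.1, a.2 ++ b.2) := by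
  obtain ⟨a, ha, hmem⟩ := Finset.mem_biUnion.mp (Finsupp.support_sum hp)
  obtain ⟨b, hb, hmem⟩ := Finset.mem_biUnion.mp (Finsupp.support_sum hmem)
  exact ⟨a, ha, b, hb, Finset.mem_singleton.mp (Finsupp.support_single_subset hmem)⟩

lemma wsum_tmul (f h : TT ω) (k : List (GenI ω) × List (GenI ω) → Kv) :
    wsum (tmul ω e f h) k = wsum f fun p => wsum h fun q =>
      vq ^ eWt ω e p.2 q.1 * k (p.1 ++ q.1, p.2 ++ q.2) := by
  rw [tmul, wsum_sum, wsum]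
  refine Finsupp.sum_congr fun p _ => ?_
  rw [wsum_sum, wsum, Finsupp.mul_sum]
  exact Finsupp.sum_congr fun q _ => by rw [wsum_single]; ring

@[simp] lemma wsum_deltaWord_nil (k : List (GenI ω) × List (GenI ω) → Kv) :
    wsum (deltaWord ω e []) k = k ([], []) := by
  rw [deltaWord, wsum_single, one_mul]

lemma wsum_deltaWord_cons (g : GenI ω) (w : List (GenI ω))
    (k : List (GenI ω) × List (GenI ω) → Kv) :
    wsum (deltaWord ω e (g :: w)) k = wsum (deltaGen ω g) fun p => wsum (deltaWord ω e w)
      fun q => vq ^ eWt ω e p.2 q.1 * k (p.1 ++ q.1, p.2 ++ q.2) :=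
  wsum_tmul e _ _ k

lemma wsum_deltaWord_singleton (g : GenI ω) (k : List (GenI ω) × List (GenI ω) → Kv) :
    wsum (deltaWord ω e [g]) k = wsum (deltaGen ω g) k := by
  rw [wsum_deltaWord_cons]
  simp

lemma wsum_deltaWord_append (u w : List (GenI ω)) (k : List (GenI ω) × List (GenI ω) → Kv) :
    wsum (deltaWord ω e (u ++ w)) k = wsum (deltaWord ω e u) fun p => wsum (deltaWord ω e w)
      fun q => vq ^ eWt ω e p.2 q.1 * k (p.1 ++ q.1, p.2 ++ q.2) := by
  induction u generalizing k with
  | nil => simp [eWt]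
  | cons g u ih =>
    rw [List.cons_append, wsum_deltaWord_cons, wsum_deltaWord_cons]
    refine wsum_congr fun p _ => ?_
    rw [ih]
    refine wsum_congr fun q _ => ?_
    rw [mul_wsum]
    refine wsum_congr fun r _ => ?_
    simp only [eWt_append_left, eWt_append_right, zpow_add₀ vq_ne_zero, List.append_assoc]
    ring

lemma wsum_deltaWord_genWord (g : GenI ω) {m : ℕ} (hm : m ≤ g.1.2)
    (k : List (GenI ω) × List (GenI ω) → Kv) :
    wsum (deltaWord ω e (genWord g m)) k = ∑ p ∈ antidiagonal m,
      vq ^ ((1 - (ω g.1.1 : ℤ)) * p.1 * p.2) * k (genWord g p.1, genWord g p.2) := by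
  by_cases h1 : 1 ≤ m
  · obtain ⟨h, hh, hgm⟩ := genWord_eq_singleton h1 hm
    have hi : h.1.1 = g.1.1 := by rw [hh]
    have hl : h.1.2 = m := by rw [hh]
    rw [hgm, wsum_deltaWord_singleton, wsum_deltaGen, hi, hl]
    refine Finset.sum_congr rfl fun p hp => ?_
    have hp := mem_antidiagonal.mp hp
    rw [genWord_congr hi (t := p.1) (by omega) (by omega),
      genWord_congr hi (t := p.2) (by omega) (by omega)]
  · obtain rfl : m = 0 := by omega
    simp

lemma wsum_deltaGen_counit_left (g : GenI ω) (k : List (GenI ω) × List (GenI ω) → Kv) :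
    wsum (deltaGen ω g) (fun p => counit p.1 * k p) = k ([], [g]) := by
  rw [wsum_deltaGen, Finset.sum_eq_single (0, g.1.2)]
  · simp
  · intro p hp hne
    have hp := mem_antidiagonal.mp hp
    have h1 : p.1 ≠ 0 := fun h => hne (Prod.ext h (by omega))
    rw [counit, if_neg ((genWord_eq_nil_iff (by omega)).not.mpr h1)]
    simp
  · exact fun h => absurd (mem_antidiagonal.mpr (zero_add _)) h

lemma wsum_deltaGen_counit_right (g : GenI ω) (k : List (GenI ω) × List (GenI ω) → Kv) :
    wsum (deltaGen ω g) (fun p => counit p.2 * k p) = k ([g], []) := by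
  rw [wsum_deltaGen, Finset.sum_eq_single (g.1.2, 0)]
  · simp
  · intro p hp hne
    have hp := mem_antidiagonal.mp hp
    have h2 : p.2 ≠ 0 := fun h => hne (Prod.ext (by omega) h)
    rw [counit, if_neg ((genWord_eq_nil_iff (by omega)).not.mpr h2)]
    simp
  · exact fun h => absurd (mem_antidiagonal.mpr (add_zero _)) h

lemma wsum_deltaWord_counit_left (w : List (GenI ω)) (k : List (GenI ω) → Kv) :
    wsum (deltaWord ω e w) (fun p => counit p.1 * k p.2) = k w := by
  induction w generalizing k with
  | nil => simp
  | cons g w ih =>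
    have h : ∀ p : List (GenI ω) × List (GenI ω),
        (wsum (deltaWord ω e w) fun q => vq ^ eWt ω e p.2 q.1 *
          (counit (p.1 ++ q.1) * k (p.2 ++ q.2))) =
        counit p.1 * wsum (deltaWord ω e w) fun q => counit q.1 * k (p.2 ++ q.2) := fun p => by
      rw [mul_wsum]
      refine wsum_congr fun q _ => ?_
      rw [counit_append]
      rcases q with ⟨_ | _, _⟩ <;> simp
    rw [wsum_deltaWord_cons, wsum_congr fun p _ => h p, wsum_deltaGen_counit_left]
    exact ih fun x => k (g :: x)

lemma wsum_deltaWord_counit_right (w : List (GenI ω)) (k : List (GenI ω) → Kv) :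
    wsum (deltaWord ω e w) (fun p => k p.1 * counit p.2) = k w := by
  induction w generalizing k with
  | nil => simp
  | cons g w ih =>
    have h : ∀ p : List (GenI ω) × List (GenI ω),
        (wsum (deltaWord ω e w) fun q => vq ^ eWt ω e p.2 q.1 *
          (k (p.1 ++ q.1) * counit (p.2 ++ q.2))) =
        counit p.2 * wsum (deltaWord ω e w) fun q => k (p.1 ++ q.1) * counit q.2 := fun p => by
      rw [mul_wsum]
      refine wsum_congr fun q _ => ?_
      rw [counit_append]
      rcases p with ⟨_, _ | _⟩ <;> simp
    rw [wsum_deltaWord_cons, wsum_congr fun p _ => h p, wsum_deltaGen_counit_right]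
    exact ih fun x => k (g :: x)

/-- `k` summed against `(1 ⊗ δ) δ(w)`. -/
def sumDeltaRight (w : List (GenI ω))
    (k : List (GenI ω) × List (GenI ω) × List (GenI ω) → Kv) : Kv :=
  wsum (deltaWord ω e w) fun p => wsum (deltaWord ω e p.2) fun r => k (p.1, r.1, r.2)

/-- `k` summed against `(δ ⊗ 1) δ(w)`. -/
def sumDeltaLeft (w : List (GenI ω))
    (k : List (GenI ω) × List (GenI ω) × List (GenI ω) → Kv) : Kv :=
  wsum (deltaWord ω e w) fun p => wsum (deltaWord ω e p.1) fun r => k (r.1, r.2, p.2)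

/-- The exponent of `v` in the product `(a ⊗ b ⊗ c)(a' ⊗ b' ⊗ c')` of `F ⊗ F ⊗ F`. -/
def twist3 (x y : List (GenI ω) × List (GenI ω) × List (GenI ω)) : ℤ :=
  eWt ω e (x.2.1 ++ x.2.2) y.1 + eWt ω e x.2.2 y.2.1

lemma sumDeltaRight_singleton_eq_sumDeltaLeft (g : GenI ω)
    (k : List (GenI ω) × List (GenI ω) × List (GenI ω) → Kv) :
    sumDeltaRight e [g] k = sumDeltaLeft e [g] k := by
  unfold sumDeltaRight sumDeltaLeft
  rw [wsum_deltaWord_singleton, wsum_deltaWord_singleton, wsum_deltaGen, wsum_deltaGen]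
  -- both sides are `Σ_{a+b+c=l} v_i^{ab+ac+bc} k(E_a, E_b, E_c)`
  let f : ℕ → ℕ → ℕ → Kv := fun a b c =>
    vq ^ ((1 - (ω g.1.1 : ℤ)) * (a * b + a * c + b * c)) * k (genWord g a, genWord g b, genWord g c)
  calc _ = ∑ p ∈ antidiagonal g.1.2, ∑ q ∈ antidiagonal p.2, f p.1 q.1 q.2 := by
          refine Finset.sum_congr rfl fun p hp => ?_
          have hp := mem_antidiagonal.mp hp
          rw [wsum_deltaWord_genWord e g (by omega), Finset.mul_sum]
          refine Finset.sum_congr rfl fun q hq => ?_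
          rw [← mem_antidiagonal.mp hq, ← mul_assoc, ← zpow_add₀ vq_ne_zero]
          simp only [f]
          congr 2
          push_cast
          ring
    _ = ∑ p ∈ antidiagonal g.1.2, ∑ q ∈ antidiagonal p.1, f q.1 q.2 p.2 :=
          sum_antidiagonal_assoc _ f
    _ = _ := by
          refine Finset.sum_congr rfl fun p hp => ?_
          have hp := mem_antidiagonal.mp hp
          rw [wsum_deltaWord_genWord e g (by omega), Finset.mul_sum]
          refine Finset.sum_congr rfl fun q hq => ?_
          rw [← mem_antidiagonal.mp hq, ← mul_assoc, ← zpow_add₀ vq_ne_zero]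
          simp only [f]
          congr 2
          push_cast
          ring

end Comultiplication

section Monomials

lemma sw_eq_basis (w : List (GenI ω)) :
    sw ω w = MonoidAlgebra.basis (FreeMonoid (GenI ω)) Kv (FreeMonoid.ofList w) := rfl

lemma basis_eq_sw (m : FreeMonoid (GenI ω)) :
    MonoidAlgebra.basis (FreeMonoid (GenI ω)) Kv m = sw ω m.toList := by
  rw [MonoidAlgebra.basis_apply, sw, FreeMonoid.ofList_toList]

lemma sw_nil : sw ω [] = 1 := rfl

lemma sw_append (u w : List (GenI ω)) : sw ω (u ++ w) = sw ω u * sw ω w := by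
  rw [sw, sw, sw, MonoidAlgebra.single_mul_single, one_mul]
  rfl

lemma single_eq_smul_sw (m : FreeMonoid (GenI ω)) (c : Kv) :
    MonoidAlgebra.single m c = c • sw ω m.toList := by
  rw [sw, MonoidAlgebra.smul_single', mul_one, FreeMonoid.ofList_toList]

@[simp] lemma deltaF_zero : deltaF ω e 0 = 0 := Finsupp.sum_zero_index

lemma deltaF_add (c c' : FA ω) : deltaF ω e (c + c') = deltaF ω e c + deltaF ω e c' :=
  Finsupp.sum_add_index' (fun _ => zero_smul _ _) fun _ _ _ => add_smul _ _ _

lemma deltaF_single (m : FreeMonoid (GenI ω)) (c : Kv) :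
    deltaF ω e (MonoidAlgebra.single m c) = c • deltaWord ω e m.toList :=
  Finsupp.sum_single_index (zero_smul _ _)

lemma deltaF_sw (w : List (GenI ω)) : deltaF ω e (sw ω w) = deltaWord ω e w := by
  rw [sw, deltaF_single, one_smul, FreeMonoid.toList_ofList]

end Monomials

section BilinearExtension

/-- The bilinear form `(a, b) ↦ ⟨a ⊗ b, f⟩` on `F`, for `f ∈ F ⊗ F`. -/
def tensorForm (B : FA ω →ₗ[Kv] FA ω →ₗ[Kv] Kv) (f : TT ω) : FA ω →ₗ[Kv] FA ω →ₗ[Kv] Kv :=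
  ∑ p ∈ f.support, f p • (LinearMap.mul Kv Kv).compl₁₂ (B.flip (sw ω p.1)) (B.flip (sw ω p.2))

lemma tensorForm_apply (B : FA ω →ₗ[Kv] FA ω →ₗ[Kv] Kv) (f : TT ω) (a b : FA ω) :
    tensorForm B f a b = wsum f fun p => B a (sw ω p.1) * B b (sw ω p.2) := by
  simp [tensorForm, wsum, Finsupp.sum]

theorem apply_mul_eq_wsum_deltaF (B : FA ω →ₗ[Kv] FA ω →ₗ[Kv] Kv)
    (h : ∀ u w w', B (sw ω u * sw ω w) (sw ω w') =
      wsum (deltaWord ω e w') fun p => B (sw ω u) (sw ω p.1) * B (sw ω w) (sw ω p.2))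
    (a b c : FA ω) :
    B (a * b) c = wsum (deltaF ω e c) fun p => B a (sw ω p.1) * B b (sw ω p.2) := by
  have hwords : ∀ u w, B (sw ω u * sw ω w) c =
      wsum (deltaF ω e c) fun p => B (sw ω u) (sw ω p.1) * B (sw ω w) (sw ω p.2) := by
    intro u w
    induction c using MonoidAlgebra.induction_linear with
    | zero => simp
    | add c c' hc hc' => rw [map_add, hc, hc', deltaF_add, wsum_add]
    | single m x => rw [deltaF_single, wsum_smul, single_eq_smul_sw, map_smul, h, smul_eq_mul]
  have hforms : (LinearMap.mul Kv (FA ω)).compr₂ (B.flip c) = tensorForm B (deltaF ω e c) := by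
    refine LinearMap.ext_basis (MonoidAlgebra.basis _ Kv) (MonoidAlgebra.basis _ Kv) fun m m' => ?_
    rw [basis_eq_sw, basis_eq_sw, tensorForm_apply, LinearMap.compr₂_apply, LinearMap.mul_apply',
      LinearMap.flip_apply, hwords]
  have := LinearMap.congr_fun₂ hforms a b
  rwa [tensorForm_apply, LinearMap.compr₂_apply, LinearMap.mul_apply', LinearMap.flip_apply]
    at this

end BilinearExtension

variable [DecidableEq I]

section Weights

@[simp] lemma wtw_nil : wtw ω [] = 0 := rfl

lemma wtw_cons (g : GenI ω) (w : List (GenI ω)) :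
    wtw ω (g :: w) = Pi.single g.1.1 g.1.2 + wtw ω w := by
  funext i
  simp only [wtw, List.filter_cons, Pi.add_apply, Pi.single_apply]
  split_ifs with h1 h2 h2 <;> simp_all

lemma wtw_append (u w : List (GenI ω)) : wtw ω (u ++ w) = wtw ω u + wtw ω w := by
  induction u with
  | nil => simp
  | cons g u ih => rw [List.cons_append, wtw_cons, wtw_cons, ih, add_assoc]

lemma wtw_singleton (g : GenI ω) : wtw ω [g] = Pi.single g.1.1 g.1.2 := by
  rw [wtw_cons, wtw_nil, add_zero]

lemma wtw_eq_zero_iff {w : List (GenI ω)} : wtw ω w = 0 ↔ w = [] := by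
  refine ⟨fun h => ?_, fun h => h ▸ wtw_nil⟩
  cases w with
  | nil => rfl
  | cons g w =>
    have := congrFun h g.1.1
    simp only [wtw_cons, Pi.add_apply, Pi.single_eq_same, Pi.zero_apply] at this
    have := g.2.1
    omega

lemma eq_of_wtw_singleton_eq {g g' : GenI ω} (h : wtw ω [g] = wtw ω [g']) : g = g' := by
  rw [wtw_singleton, wtw_singleton] at h
  have h1 := congrFun h g.1.1
  rw [Pi.single_eq_same, Pi.single_apply] at h1
  split_ifs at h1 with hi
  · exact Subtype.ext (Prod.ext hi h1)
  · exact absurd h1 (Nat.one_le_iff_ne_zero.mp g.2.1)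

lemma wtw_genWord (g : GenI ω) {t : ℕ} (ht : t ≤ g.1.2) :
    wtw ω (genWord g t) = Pi.single g.1.1 t := by
  unfold genWord
  split_ifs with h
  · exact wtw_singleton _
  · obtain rfl : t = 0 := by omega
    simp

lemma sum_map_eq_sum_wtw (u : List (GenI ω)) (c : I → ℤ) {s : Finset I}
    (hs : ∀ g ∈ u, g.1.1 ∈ s) :
    (u.map fun g => (g.1.2 : ℤ) * c g.1.1).sum = ∑ i ∈ s, (wtw ω u i : ℤ) * c i := by
  induction u with
  | nil => simp
  | cons g u ih =>
    have hg : ∑ i ∈ s, ((Pi.single g.1.1 g.1.2 : I → ℕ) i : ℤ) * c i = g.1.2 * c g.1.1 := by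
      rw [Finset.sum_eq_single_of_mem _ (hs g List.mem_cons_self) fun i _ hi => by simp [hi]]
      simp
    simp only [List.map_cons, List.sum_cons, wtw_cons, Pi.add_apply, Nat.cast_add, add_mul,
      Finset.sum_add_distrib, hg, ih fun g' hg' => hs g' (List.mem_cons_of_mem _ hg')]

lemma sum_map_congr_of_wtw_eq {u u' : List (GenI ω)} (h : wtw ω u = wtw ω u') (c : I → ℤ) :
    (u.map fun g => (g.1.2 : ℤ) * c g.1.1).sum = (u'.map fun g => (g.1.2 : ℤ) * c g.1.1).sum := by
  let s := (u ++ u').toFinset.image fun g => g.1.1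
  have hs : ∀ g ∈ u ++ u', g.1.1 ∈ s := fun g hg =>
    Finset.mem_image_of_mem _ (List.mem_toFinset.mpr hg)
  rw [sum_map_eq_sum_wtw u c fun g hg => hs g (List.mem_append_left _ hg),
    sum_map_eq_sum_wtw u' c fun g hg => hs g (List.mem_append_right _ hg), h]

lemma eWt_congr_left {u u' : List (GenI ω)} (h : wtw ω u = wtw ω u') (w : List (GenI ω)) :
    eWt ω e u w = eWt ω e u' w := by
  rw [eWt_eq_sum_map, eWt_eq_sum_map]
  exact sum_map_congr_of_wtw_eq h fun i => (w.map fun g' => (g'.1.2 : ℤ) * e i g'.1.1).sum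

lemma eWt_congr_right (hsym : ∀ i j, e i j = e j i) (u : List (GenI ω)) {w w' : List (GenI ω)}
    (h : wtw ω w = wtw ω w') : eWt ω e u w = eWt ω e u w' := by
  rw [eWt_comm e hsym, eWt_congr_left e h, eWt_comm e hsym]

lemma wtw_add_of_mem_support_deltaWord {w : List (GenI ω)}
    {p : List (GenI ω) × List (GenI ω)} (hp : p ∈ (deltaWord ω e w).support) :
    wtw ω p.1 + wtw ω p.2 = wtw ω w := by
  induction w generalizing p with
  | nil =>
    obtain rfl := Finset.mem_singleton.mp (Finsupp.support_single_subset hp)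
    simp
  | cons g w ih =>
    obtain ⟨a, ha, b, hb, rfl⟩ := mem_support_tmul e hp
    obtain ⟨q, hq, rfl⟩ := mem_support_deltaGen ha
    rw [mem_antidiagonal] at hq
    dsimp only
    rw [wtw_append, wtw_append, wtw_genWord g (by omega), wtw_genWord g (by omega), wtw_cons,
      ← ih hb, ← hq, Pi.single_add]
    abel

lemma wsum_deltaWord_congr {w : List (GenI ω)} {k k' : List (GenI ω) × List (GenI ω) → Kv}
    (h : ∀ p : List (GenI ω) × List (GenI ω), wtw ω p.1 + wtw ω p.2 = wtw ω w → k p = k' p) :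
    wsum (deltaWord ω e w) k = wsum (deltaWord ω e w) k' :=
  wsum_congr fun p hp => h p (wtw_add_of_mem_support_deltaWord e hp)

end Weights

section Coassociativity

lemma sumDeltaRight_append (u w : List (GenI ω))
    (k : List (GenI ω) × List (GenI ω) × List (GenI ω) → Kv) :
    sumDeltaRight e (u ++ w) k = sumDeltaRight e u fun x => sumDeltaRight e w fun y =>
      vq ^ twist3 e x y * k (x.1 ++ y.1, x.2.1 ++ y.2.1, x.2.2 ++ y.2.2) := by
  unfold sumDeltaRight
  rw [wsum_deltaWord_append]
  refine wsum_congr fun a _ => ?_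
  rw [wsum_comm (deltaWord ω e a.2)]
  refine wsum_congr fun b _ => ?_
  rw [wsum_deltaWord_append, mul_wsum]
  refine wsum_deltaWord_congr e fun c hc => ?_
  rw [mul_wsum]
  refine wsum_congr fun d _ => ?_
  simp only [twist3]
  rw [eWt_congr_left e (by rw [wtw_append, hc]), zpow_add₀ vq_ne_zero]
  ring

lemma sumDeltaLeft_append (hsym : ∀ i j, e i j = e j i) (u w : List (GenI ω))
    (k : List (GenI ω) × List (GenI ω) × List (GenI ω) → Kv) :
    sumDeltaLeft e (u ++ w) k = sumDeltaLeft e u fun x => sumDeltaLeft e w fun y =>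
      vq ^ twist3 e x y * k (x.1 ++ y.1, x.2.1 ++ y.2.1, x.2.2 ++ y.2.2) := by
  unfold sumDeltaLeft
  rw [wsum_deltaWord_append]
  refine wsum_congr fun a _ => ?_
  rw [wsum_comm (deltaWord ω e a.1)]
  refine wsum_congr fun b _ => ?_
  rw [wsum_deltaWord_append, mul_wsum]
  refine wsum_congr fun c _ => ?_
  rw [mul_wsum]
  refine wsum_deltaWord_congr e fun d hd => ?_
  simp only [twist3]
  rw [eWt_append_left, eWt_congr_right e hsym a.2 (w' := d.1 ++ d.2)
    (by rw [wtw_append, hd]), eWt_append_right]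
  simp only [zpow_add₀ vq_ne_zero]
  ring

theorem sumDeltaRight_eq_sumDeltaLeft (hsym : ∀ i j, e i j = e j i) (w : List (GenI ω))
    (k : List (GenI ω) × List (GenI ω) × List (GenI ω) → Kv) :
    sumDeltaRight e w k = sumDeltaLeft e w k := by
  induction w generalizing k with
  | nil => simp [sumDeltaRight, sumDeltaLeft]
  | cons g w ih =>
    rw [← List.singleton_append, sumDeltaRight_append, sumDeltaLeft_append e hsym]
    simp only [ih]
    exact sumDeltaRight_singleton_eq_sumDeltaLeft e g _

end Coassociativity

section Pairing

/-- `⟨E_{i,n}, w⟩` (with `E_{i,0} = 1`), read off one letter of `w` at a time. -/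
def letterPair (i : I) : ℕ → List (GenI ω) → Kv
  | n, [] => if n = 0 then 1 else 0
  | n, c :: w =>
    if c.1.1 = i ∧ c.1.2 ≤ n then
      vq ^ ((1 - (ω i : ℤ)) * c.1.2 * ((n : ℤ) - c.1.2)) * ν c * letterPair i (n - c.1.2) w
    else 0

def pair : List (GenI ω) → List (GenI ω) → Kv
  | [], w => counit w
  | g :: u, w => wsum (deltaWord ω e w) fun p => letterPair ν g.1.1 g.1.2 p.1 * pair u p.2

@[simp] lemma pair_nil (w : List (GenI ω)) : pair e ν [] w = counit w := rfl

lemma pair_cons (g : GenI ω) (u w : List (GenI ω)) :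
    pair e ν (g :: u) w =
      wsum (deltaWord ω e w) fun p => letterPair ν g.1.1 g.1.2 p.1 * pair e ν u p.2 := rfl

lemma letterPair_zero (i : I) (w : List (GenI ω)) : letterPair ν i 0 w = counit w := by
  cases w with
  | nil => simp [letterPair]
  | cons c w =>
    rw [letterPair, if_neg fun h => Nat.one_le_iff_ne_zero.mp c.2.1 (Nat.le_zero.mp h.2),
      counit_cons]

lemma pair_singleton (g : GenI ω) (w : List (GenI ω)) :
    pair e ν [g] w = letterPair ν g.1.1 g.1.2 w := by
  rw [pair_cons]
  exact wsum_deltaWord_counit_right e w _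

lemma pair_genWord (g : GenI ω) {t : ℕ} (ht : t ≤ g.1.2) (w : List (GenI ω)) :
    pair e ν (genWord g t) w = letterPair ν g.1.1 t w := by
  by_cases h1 : 1 ≤ t
  · obtain ⟨h, hh, hg⟩ := genWord_eq_singleton h1 ht
    rw [hg, pair_singleton, hh]
  · obtain rfl : t = 0 := by omega
    rw [genWord_zero, pair_nil, letterPair_zero]

lemma wtw_eq_of_letterPair_ne_zero {i : I} {n : ℕ} {w : List (GenI ω)}
    (h : letterPair ν i n w ≠ 0) : wtw ω w = Pi.single i n := by
  induction w generalizing n with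
  | nil =>
    obtain rfl : n = 0 := by by_contra hn; simp [letterPair, hn] at h
    simp
  | cons c w ih =>
    rw [letterPair] at h
    split_ifs at h with hc
    · rw [wtw_cons, ih (right_ne_zero_of_mul h), hc.1, ← Pi.single_add, Nat.add_sub_cancel' hc.2]
    · exact absurd rfl h

lemma letterPair_append (i : I) (n : ℕ) (x y : List (GenI ω)) :
    letterPair ν i n (x ++ y) = ∑ p ∈ antidiagonal n,
      vq ^ ((1 - (ω i : ℤ)) * p.1 * p.2) * (letterPair ν i p.1 x * letterPair ν i p.2 y) := by
  induction x generalizing n with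
  | nil =>
    rw [Finset.sum_eq_single (0, n) (fun p hp hne => ?_) (fun h => absurd
      (mem_antidiagonal.mpr (zero_add n)) h)]
    · simp [letterPair]
    · have hp := mem_antidiagonal.mp hp
      have h1 : p.1 ≠ 0 := fun h => hne (Prod.ext h (by omega))
      simp [letterPair, h1]
  | cons c x ih =>
    by_cases hc : c.1.1 = i ∧ c.1.2 ≤ n
    · rw [List.cons_append, letterPair, if_pos hc, ih, Finset.mul_sum,
        ← sum_antidiagonal_ite_le_fst hc.2 fun a b =>
          vq ^ ((1 - (ω i : ℤ)) * c.1.2 * ((n : ℤ) - c.1.2)) * ν c *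
            (vq ^ ((1 - (ω i : ℤ)) * a * b) * (letterPair ν i a x * letterPair ν i b y))]
      refine Finset.sum_congr rfl fun p hp => ?_
      have hp := mem_antidiagonal.mp hp
      simp only [letterPair, hc.1, true_and]
      split_ifs with hcp
      · rw [Nat.cast_sub hcp]
        set κ : ℤ := 1 - (ω i : ℤ)
        have hexp : κ * c.1.2 * (n - c.1.2) + κ * (p.1 - c.1.2) * p.2 =
            κ * p.1 * p.2 + κ * c.1.2 * (p.1 - c.1.2) := by
          rw [← hp]; push_cast; ring
        calc _ = vq ^ (κ * c.1.2 * (n - c.1.2) + κ * (p.1 - c.1.2) * p.2) * ν c *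
              (letterPair ν i (p.1 - c.1.2) x * letterPair ν i p.2 y) := by
              rw [zpow_add₀ vq_ne_zero]; ring
          _ = _ := by rw [hexp, zpow_add₀ vq_ne_zero]; ring
      · simp
    · rw [List.cons_append, letterPair, if_neg hc]
      refine (Finset.sum_eq_zero fun p hp => ?_).symm
      have hp := mem_antidiagonal.mp hp
      rw [letterPair, if_neg fun h => hc ⟨h.1, by omega⟩]
      simp

theorem pair_singleton_append (g : GenI ω) (x y : List (GenI ω)) :
    pair e ν [g] (x ++ y) = wsum (deltaGen ω g) fun r => pair e ν r.1 x * pair e ν r.2 y := by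
  rw [pair_singleton, letterPair_append, wsum_deltaGen]
  refine Finset.sum_congr rfl fun p hp => ?_
  have hp := mem_antidiagonal.mp hp
  rw [pair_genWord e ν g (by omega), pair_genWord e ν g (by omega)]

theorem wtw_eq_of_pair_ne_zero {u w : List (GenI ω)} (h : pair e ν u w ≠ 0) :
    wtw ω u = wtw ω w := by
  induction u generalizing w with
  | nil =>
    cases w with
    | nil => rfl
    | cons c w => simp at h
  | cons g u ih =>
    by_contra hne
    refine h (wsum_eq_zero fun p hp => ?_)
    by_contra hp0
    rw [← wtw_add_of_mem_support_deltaWord e hp, wtw_cons,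
      wtw_eq_of_letterPair_ne_zero ν (left_ne_zero_of_mul hp0),
      ih (right_ne_zero_of_mul hp0)] at hne
    exact hne rfl

theorem pair_append_left (hsym : ∀ i j, e i j = e j i) (u w w' : List (GenI ω)) :
    pair e ν (u ++ w) w' = wsum (deltaWord ω e w') fun p => pair e ν u p.1 * pair e ν w p.2 := by
  induction u generalizing w' with
  | nil => exact (wsum_deltaWord_counit_left e w' _).symm
  | cons g u ih =>
    calc pair e ν (g :: (u ++ w)) w'
        = sumDeltaRight e w' fun x =>
            letterPair ν g.1.1 g.1.2 x.1 * (pair e ν u x.2.1 * pair e ν w x.2.2) := by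
          rw [pair_cons, sumDeltaRight]
          exact wsum_congr fun p _ => by rw [ih, mul_wsum]
      _ = sumDeltaLeft e w' fun x =>
            letterPair ν g.1.1 g.1.2 x.1 * (pair e ν u x.2.1 * pair e ν w x.2.2) :=
          sumDeltaRight_eq_sumDeltaLeft e hsym w' _
      _ = _ := by
          rw [sumDeltaLeft]
          refine wsum_congr fun p _ => ?_
          rw [pair_cons, wsum_mul]
          exact wsum_congr fun r _ => by ring

lemma zpow_eWt_mul_pair_mul_pair (hsym : ∀ i j, e i j = e j i) (x y z t : List (GenI ω)) :
    vq ^ eWt ω e x y * (pair e ν z y * pair e ν t x) =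
      vq ^ eWt ω e z t * (pair e ν z y * pair e ν t x) := by
  by_cases h : pair e ν z y = 0 ∨ pair e ν t x = 0
  · rcases h with h | h <;> simp [h]
  · obtain ⟨hzy, htx⟩ := not_or.mp h
    rw [eWt_congr_left e (wtw_eq_of_pair_ne_zero e ν htx).symm,
      eWt_congr_right e hsym _ (wtw_eq_of_pair_ne_zero e ν hzy).symm, eWt_comm e hsym]

theorem pair_append_right_append (hsym : ∀ i j, e i j = e j i) {w₁ w₂ : List (GenI ω)}
    (h₁ : ∀ u w', pair e ν w₁ (u ++ w') =
      wsum (deltaWord ω e w₁) fun p => pair e ν p.1 u * pair e ν p.2 w')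
    (h₂ : ∀ u w', pair e ν w₂ (u ++ w') =
      wsum (deltaWord ω e w₂) fun p => pair e ν p.1 u * pair e ν p.2 w')
    (u w' : List (GenI ω)) :
    pair e ν (w₁ ++ w₂) (u ++ w') =
      wsum (deltaWord ω e (w₁ ++ w₂)) fun p => pair e ν p.1 u * pair e ν p.2 w' := by
  have key : ∀ r s a b : List (GenI ω) × List (GenI ω),
      vq ^ eWt ω e a.2 b.1 * (pair e ν r.1 a.1 * pair e ν r.2 b.1 *
        (pair e ν s.1 a.2 * pair e ν s.2 b.2)) =
      vq ^ eWt ω e r.2 s.1 * (pair e ν r.1 a.1 * pair e ν s.1 a.2 *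
        (pair e ν r.2 b.1 * pair e ν s.2 b.2)) := fun r s a b => by
    linear_combination (pair e ν r.1 a.1 * pair e ν s.2 b.2) *
      zpow_eWt_mul_pair_mul_pair e ν hsym a.2 b.1 r.2 s.1
  calc pair e ν (w₁ ++ w₂) (u ++ w')
      = wsum (deltaWord ω e u) fun a => wsum (deltaWord ω e w') fun b =>
          wsum (deltaWord ω e w₁) fun r => wsum (deltaWord ω e w₂) fun s =>
            vq ^ eWt ω e a.2 b.1 * (pair e ν r.1 a.1 * pair e ν r.2 b.1 *
              (pair e ν s.1 a.2 * pair e ν s.2 b.2)) := by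
        rw [pair_append_left e ν hsym, wsum_deltaWord_append]
        refine wsum_congr fun a _ => wsum_congr fun b _ => ?_
        rw [h₁, h₂, wsum_mul_wsum, mul_wsum]
        exact wsum_congr fun r _ => by rw [mul_wsum]
    _ = wsum (deltaWord ω e w₁) fun r => wsum (deltaWord ω e w₂) fun s =>
          wsum (deltaWord ω e u) fun a => wsum (deltaWord ω e w') fun b =>
            vq ^ eWt ω e r.2 s.1 * (pair e ν r.1 a.1 * pair e ν s.1 a.2 *
              (pair e ν r.2 b.1 * pair e ν s.2 b.2)) := by
        simp only [key]
        simp only [wsum_comm (deltaWord ω e w') (deltaWord ω e w₁),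
          wsum_comm (deltaWord ω e u) (deltaWord ω e w₁),
          wsum_comm (deltaWord ω e w') (deltaWord ω e w₂),
          wsum_comm (deltaWord ω e u) (deltaWord ω e w₂)]
    _ = _ := by
        rw [wsum_deltaWord_append]
        refine wsum_congr fun r _ => wsum_congr fun s _ => ?_
        rw [pair_append_left e ν hsym, pair_append_left e ν hsym, wsum_mul_wsum, mul_wsum]
        exact wsum_congr fun a _ => by rw [mul_wsum]

theorem pair_append_right (hsym : ∀ i j, e i j = e j i) (w u w' : List (GenI ω)) :
    pair e ν w (u ++ w') = wsum (deltaWord ω e w) fun p => pair e ν p.1 u * pair e ν p.2 w' := by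
  induction w generalizing u w' with
  | nil => simp [counit_append]
  | cons g w ih =>
    rw [← List.singleton_append]
    refine pair_append_right_append e ν hsym (fun u w' => ?_) ih u w'
    rw [pair_singleton_append, wsum_deltaWord_singleton]

end Pairing

def pairingForm : FA ω →ₗ[Kv] FA ω →ₗ[Kv] Kv :=
  (MonoidAlgebra.basis _ Kv).constr Kv fun m =>
    (MonoidAlgebra.basis _ Kv).constr Kv fun m' => pair e ν m.toList m'.toList

lemma pairingForm_sw (u w : List (GenI ω)) : pairingForm e ν (sw ω u) (sw ω w) = pair e ν u w := by
  rw [pairingForm, sw_eq_basis, sw_eq_basis, Module.Basis.constr_basis, Module.Basis.constr_basis,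
    FreeMonoid.toList_ofList, FreeMonoid.toList_ofList]

theorem pairingForm_mul_left (hsym : ∀ i j, e i j = e j i) (a b c : FA ω) :
    pairingForm e ν (a * b) c = wsum (deltaF ω e c) fun p =>
      pairingForm e ν a (sw ω p.1) * pairingForm e ν b (sw ω p.2) :=
  apply_mul_eq_wsum_deltaF e _ (fun u w w' => by
    simp only [← sw_append, pairingForm_sw, pair_append_left e ν hsym]) a b c

theorem pairingForm_mul_right (hsym : ∀ i j, e i j = e j i) (a b c : FA ω) :
    pairingForm e ν a (b * c) = wsum (deltaF ω e a) fun p =>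
      pairingForm e ν (sw ω p.1) b * pairingForm e ν (sw ω p.2) c :=
  apply_mul_eq_wsum_deltaF e (pairingForm e ν).flip (fun u w w' => by
    simp only [LinearMap.flip_apply, ← sw_append, pairingForm_sw,
      pair_append_right e ν hsym]) b c a

theorem pairingAxioms_pairingForm (hsym : ∀ i j, e i j = e j i) :
    PairingAxioms ω e ν (pairingForm e ν) := by
  refine ⟨?_, fun w w' h => ?_, fun g => ?_, fun a b c => ?_, fun a b c => ?_⟩
  · rw [← sw_nil, pairingForm_sw, pair_nil, counit_nil]
  · rw [pairingForm_sw]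
    exact by_contra (h ∘ wtw_eq_of_pair_ne_zero e ν)
  · rw [pairingForm_sw, pair_singleton]
    simp [letterPair]
  · rw [sum_mul_mul_eq_wsum]
    exact pairingForm_mul_left e ν hsym a b c
  · rw [sum_mul_mul_eq_wsum]
    exact pairingForm_mul_right e ν hsym a b c

section Uniqueness

variable {e ν} {B : FA ω →ₗ[Kv] FA ω →ₗ[Kv] Kv}

lemma apply_sw_nil_of_pairingAxioms (hB : PairingAxioms ω e ν B) (w : List (GenI ω)) :
    B (sw ω []) (sw ω w) = counit w := by
  cases w with
  | nil => exact hB.1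
  | cons c w =>
    exact hB.2.1 _ _ fun h => List.cons_ne_nil c w (wtw_eq_zero_iff.mp (by rw [← h, wtw_nil]))

lemma apply_sw_singleton_singleton_of_pairingAxioms (hB : PairingAxioms ω e ν B)
    (g c : GenI ω) : B (sw ω [g]) (sw ω [c]) = letterPair ν g.1.1 g.1.2 [c] := by
  by_cases hgc : g = c
  · subst hgc
    simp [hB.2.2.1, letterPair]
  · rw [hB.2.1 _ _ fun h => hgc (eq_of_wtw_singleton_eq h)]
    by_contra hne
    have hc := wtw_eq_of_letterPair_ne_zero ν (Ne.symm hne)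
    rw [← wtw_singleton] at hc
    exact hgc (eq_of_wtw_singleton_eq hc).symm

lemma apply_sw_genWord_of_pairingAxioms (hB : PairingAxioms ω e ν B) {y : List (GenI ω)}
    (hy : ∀ g : GenI ω, B (sw ω [g]) (sw ω y) = letterPair ν g.1.1 g.1.2 y)
    (g : GenI ω) {t : ℕ} (ht : t ≤ g.1.2) :
    B (sw ω (genWord g t)) (sw ω y) = pair e ν (genWord g t) y := by
  by_cases h1 : 1 ≤ t
  · obtain ⟨h, -, hg⟩ := genWord_eq_singleton h1 ht
    rw [hg, hy, pair_singleton]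
  · obtain rfl : t = 0 := by omega
    rw [genWord_zero, apply_sw_nil_of_pairingAxioms hB, pair_nil]

lemma apply_sw_singleton_of_pairingAxioms (hB : PairingAxioms ω e ν B) (w : List (GenI ω))
    (g : GenI ω) : B (sw ω [g]) (sw ω w) = letterPair ν g.1.1 g.1.2 w := by
  induction w generalizing g with
  | nil =>
    rw [hB.2.1 _ _ fun h => List.cons_ne_nil g [] (wtw_eq_zero_iff.mp h), letterPair,
      if_neg (Nat.one_le_iff_ne_zero.mp g.2.1)]
  | cons c w ih =>
    rw [show sw ω (c :: w) = sw ω [c] * sw ω w from sw_append [c] w, hB.2.2.2.2, deltaF_sw,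
      sum_mul_mul_eq_wsum, wsum_deltaWord_singleton, ← pair_singleton e,
      show c :: w = [c] ++ w from rfl, pair_singleton_append]
    refine wsum_congr fun r hr => ?_
    obtain ⟨q, hq, rfl⟩ := mem_support_deltaGen hr
    have hq := mem_antidiagonal.mp hq
    rw [apply_sw_genWord_of_pairingAxioms hB
        (fun g' => apply_sw_singleton_singleton_of_pairingAxioms hB g' c) g (by omega),
      apply_sw_genWord_of_pairingAxioms hB ih g (by omega)]

theorem apply_sw_of_pairingAxioms (hB : PairingAxioms ω e ν B) (u w : List (GenI ω)) :
    B (sw ω u) (sw ω w) = pair e ν u w := by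
  induction u generalizing w with
  | nil => exact apply_sw_nil_of_pairingAxioms hB w
  | cons g u ih =>
    rw [show sw ω (g :: u) = sw ω [g] * sw ω u from sw_append [g] u, hB.2.2.2.1, deltaF_sw,
      sum_mul_mul_eq_wsum, pair_cons]
    exact wsum_congr fun p _ => by rw [apply_sw_singleton_of_pairingAxioms hB, ih]

theorem eq_pairingForm (hB : PairingAxioms ω e ν B) : B = pairingForm e ν :=
  LinearMap.ext_basis (MonoidAlgebra.basis _ Kv) (MonoidAlgebra.basis _ Kv) fun m m' => by
    rw [basis_eq_sw, basis_eq_sw, apply_sw_of_pairingAxioms hB, pairingForm_sw]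

end Uniqueness

end HopfPairing

end

theorem exists_unique_hopf_pairing_general {I : Type} [DecidableEq I]
    (ω : I → ℕ) (e : I → I → ℤ) (hsym : ∀ i j, e i j = e j i)
    (ν : GenI ω → Kv) :
    ∃! B : FA ω →ₗ[Kv] FA ω →ₗ[Kv] Kv, PairingAxioms ω e ν B :=
  ⟨HopfPairing.pairingForm e ν, HopfPairing.pairingAxioms_pairingForm e ν hsym,
    fun _ hB => HopfPairing.eq_pairingForm hB⟩

/-- for any family of scalars `ν_ι` there is a unique bilinear form
`⟨-,-⟩` on `F` vanishing on pairs of distinct weights, with `⟨E_ι,E_ι⟩ = ν_ι`, and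
compatible with the comultiplication `δ` (Hopf pairing property). -/
theorem exists_unique_hopf_pairing {I : Type} [DecidableEq I]
    (ω : I → ℕ) (e : I → I → ℤ) (hsym : ∀ i j, e i j = e j i)
    (hii : ∀ i, e i i = 2 - 2 * (ω i : ℤ))
    (ν : GenI ω → Kv) :
    ∃! B : FA ω →ₗ[Kv] FA ω →ₗ[Kv] Kv, PairingAxioms ω e ν B :=
  exists_unique_hopf_pairing_general ω e hsym ν
end

section
/- In the free algebra F with the Hopf pairing ⟨−,−⟩ determined by ⟨E_{i,l}, E_{i,l}⟩ = ν_{i,l} and the coproduct δ(E_{i,l}) = Σ_{t+t'=l} v_i^{tt'} E_{i,t}⊗E_{i,t'}, one has for any imaginary vertex i and any composition c = (c_1,…,c_r) with |c| = l: ⟨E_{i,l}, E_{i,c}⟩ = v_i^{Σ_{k<j} c_k c_j} · Π_j ν_{i,c_j}, where E_{i,c} = E_{i,c_1}⋯E_{i,c_r}. -/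
/- Setting for the generalized quantum group: `I` is the vertex set of a quiver with loops,
`ω i` the number of loops at `i` (`i` is real iff `ω i = 0`), `e` the symmetric Euler form
with `e i i = 2 - 2 ω i`.  `I_∞ = (I^re × {1}) ∪ (I^im × ℕ_{≥1})` is the set of generators,
`F` is the free `ℚ(v)`-algebra on the generators `E_{i,l}` (`(i,l) ∈ I_∞`), realized as the
monoid algebra of the free monoid on `I_∞`.  `F ⊗ F` carries the twisted multiplication
`(a⊗b)(c⊗d) = v^{(|b|,|c|)} ac ⊗ bd`, and `δ : F → F ⊗ F` is the algebra morphism with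
`δ(E_{i,l}) = Σ_{t+t'=l} v_i^{tt'} E_{i,t} ⊗ E_{i,t'}` (`v_i = v^{(i,i)/2} = v^{1-ω i}`). -/

open scoped Classical

noncomputable section
variable {I : Type} [DecidableEq I]

/-- The generator `E_{i,l}` for an imaginary vertex `i` (`ω i ≥ 1`). -/
def gIm (ω : I → ℕ) (i : I) (him : 1 ≤ ω i) (l : ℕ) (hl : 1 ≤ l) : GenI ω :=
  ⟨(i, l), hl, fun h0 => absurd (show ω i = 0 from h0) (by omega)⟩

/-- `E_{i,c} = E_{i,c_1} ⋯ E_{i,c_r}` for a composition `c`. -/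
def Ecomp (ω : I → ℕ) (i : I) (him : 1 ≤ ω i) (c : List ℕ) (hc : ∀ k ∈ c, 1 ≤ k) :
    FA ω :=
  (c.attach.map fun j => sw ω [gIm ω i him j.1 (hc j.1 j.2)]).prod

/-- `Σ_{k<j} c_k c_j` for a composition `c`. -/
def crossSum (c : List ℕ) : ℕ :=
  ∑ j ∈ Finset.range c.length, ∑ k ∈ Finset.range j, (c.getD k 0) * (c.getD j 0)

/-! Pair `E_{i,l}` against `E_{i,c_1} · E_{i,c'}` with `c' = (c_2,…,c_r)` using
`⟨a, bc⟩ = ⟨δ(a), b ⊗ c⟩`. In `δ(E_{i,l}) = Σ_t v_i^{t(l-t)} E_{i,t} ⊗ E_{i,l-t}` only the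
term `t = c_1` pairs nontrivially with `E_{i,c_1}`, for weight reasons, so
`⟨E_{i,l}, E_{i,c}⟩ = v_i^{c_1 |c'|} ν_{i,c_1} ⟨E_{i,|c'|}, E_{i,c'}⟩`, and induction on `c`
finishes (with `E_{i,0} = 1` and `⟨1,1⟩ = 1` at the end). -/

lemma List.prod_map_attach_cons {α M : Type*} [Monoid M] (a : α) (l : List α)
    (f : ∀ x, x ∈ a :: l → M) :
    ((a :: l).attach.map fun x => f x.1 x.2).prod =
      f a List.mem_cons_self *
        (l.attach.map fun x => f x.1 (List.mem_cons_of_mem a x.2)).prod := by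
  rw [List.attach_cons, List.map_cons, List.prod_cons, List.map_map]
  rfl

lemma Finsupp.sum_finsetSum_smul_single_one_mul_mul {ι α R : Type*} [CommSemiring R]
    (s : Finset ι) (r : ι → R) (p : ι → α) (g h : α → R) :
    (∑ t ∈ s, r t • Finsupp.single (p t) (1 : R)).sum (fun q a => a * g q * h q) =
      ∑ t ∈ s, r t * g (p t) * h (p t) := by
  rw [← Finsupp.sum_finsetSum_index (by simp) (fun _ _ _ => by rw [add_mul, add_mul])]
  refine Finset.sum_congr rfl fun t _ => ?_
  rw [Finsupp.smul_single, smul_eq_mul, mul_one, Finsupp.sum_single_index (by simp)]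

lemma List.sum_range_length_getD (c : List ℕ) :
    ∑ j ∈ Finset.range c.length, c.getD j 0 = c.sum := by
  induction c with
  | nil => rfl
  | cons a c ih =>
    rw [List.length_cons, Finset.sum_range_succ', List.sum_cons, add_comm a]
    simp only [List.getD_cons_succ, List.getD_cons_zero, ih]

lemma crossSum_cons (a : ℕ) (c : List ℕ) : crossSum (a :: c) = a * c.sum + crossSum c := by
  unfold crossSum
  simp only [List.length_cons, Finset.sum_range_succ', Finset.range_zero, Finset.sum_empty,
    List.getD_cons_succ, List.getD_cons_zero, Finset.sum_add_distrib, add_zero]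
  rw [← Finset.mul_sum, List.sum_range_length_getD]
  ring

section

variable {I : Type} (ω : I → ℕ) (i : I) (him : 1 ≤ ω i)

def imGenWord (t : ℕ) : List (GenI ω) :=
  if h : 1 ≤ t then [gIm ω i him t h] else []

lemma imGenWord_of_pos {t : ℕ} (ht : 1 ≤ t) : imGenWord ω i him t = [gIm ω i him t ht] :=
  dif_pos ht

lemma imGenWord_zero : imGenWord ω i him 0 = [] := rfl

lemma mkw_gIm {l : ℕ} (hl : 1 ≤ l) (t : ℕ) (ht : t ≤ (gIm ω i him l hl).1.2) :
    mkw ω (gIm ω i him l hl) t ht = imGenWord ω i him t := by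
  by_cases h : 1 ≤ t <;> simp [mkw, imGenWord, gIm, h]

lemma wtw_imGenWord [DecidableEq I] (t : ℕ) : wtw ω (imGenWord ω i him t) i = t := by
  rcases Nat.eq_zero_or_pos t with rfl | ht
  · rfl
  · rw [imGenWord_of_pos ω i him ht, wtw, List.filter_cons_of_pos (by simp [gIm])]
    rfl

lemma deltaGen_gIm {l : ℕ} (hl : 1 ≤ l) :
    deltaGen ω (gIm ω i him l hl) =
      ∑ t ∈ Finset.range (l + 1), vq ^ ((1 - (ω i : ℤ)) * t * (l - t)) •
        Finsupp.single (imGenWord ω i him t, imGenWord ω i him (l - t)) (1 : Kv) := by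
  rw [deltaGen]
  conv_rhs => rw [← Finset.sum_attach]
  refine Finset.sum_congr rfl fun t _ => ?_
  rw [mkw_gIm, mkw_gIm]
  rfl

lemma Ecomp_nil (hc : ∀ k ∈ ([] : List ℕ), 1 ≤ k) : Ecomp ω i him [] hc = 1 := rfl

lemma Ecomp_cons (a : ℕ) (c : List ℕ) (hc : ∀ k ∈ a :: c, 1 ≤ k) :
    Ecomp ω i him (a :: c) hc =
      sw ω [gIm ω i him a (hc a List.mem_cons_self)] *
        Ecomp ω i him c (fun k hk => hc k (List.mem_cons_of_mem a hk)) :=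
  List.prod_map_attach_cons a c fun k hk => sw ω [gIm ω i him k (hc k hk)]

end

lemma vq_ne_zero : vq ≠ 0 := RatFunc.X_ne_zero

lemma sw_nil {I : Type} (ω : I → ℕ) : sw ω [] = 1 := rfl

lemma tmul_single_nil {I : Type} [DecidableEq I] (ω : I → ℕ) (e : I → I → ℤ) (f : TT ω) :
    tmul ω e f (Finsupp.single ([], []) 1) = f := by
  refine (Finsupp.sum_congr fun p _ => ?_).trans (Finsupp.sum_single f)
  rw [Finsupp.sum_single_index (by simp)]
  simp [eWt]

lemma deltaF_sw_singleton {I : Type} [DecidableEq I] (ω : I → ℕ) (e : I → I → ℤ)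
    (g : GenI ω) : deltaF ω e (sw ω [g]) = deltaGen ω g := by
  rw [deltaF, sw, MonoidAlgebra.coeff_single, Finsupp.sum_single_index (by simp), one_smul]
  exact tmul_single_nil ω e (deltaGen ω g)

namespace PairingAxioms

variable {I : Type} [DecidableEq I] {ω : I → ℕ} {e : I → I → ℤ} {ν : GenI ω → Kv}
  {B : FA ω →ₗ[Kv] FA ω →ₗ[Kv] Kv}

lemma pairing_imGenWord_gIm (hB : PairingAxioms ω e ν B) {i : I} (him : 1 ≤ ω i)
    (t : ℕ) {m : ℕ} (hm : 1 ≤ m) :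
    B (sw ω (imGenWord ω i him t)) (sw ω [gIm ω i him m hm]) =
      if t = m then ν (gIm ω i him m hm) else 0 := by
  split_ifs with h
  · subst h
    rw [imGenWord_of_pos ω i him hm, hB.2.2.1]
  · refine hB.2.1 _ _ fun hw => h ?_
    have := congrFun hw i
    rwa [wtw_imGenWord, ← imGenWord_of_pos ω i him hm, wtw_imGenWord] at this

lemma pairing_gIm_gIm_mul (hB : PairingAxioms ω e ν B) {i : I} (him : 1 ≤ ω i)
    {l m : ℕ} (hl : 1 ≤ l) (hm : 1 ≤ m) (hml : m ≤ l) (y : FA ω) :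
    B (sw ω [gIm ω i him l hl]) (sw ω [gIm ω i him m hm] * y) =
      vq ^ ((1 - (ω i : ℤ)) * m * (l - m)) * ν (gIm ω i him m hm) *
        B (sw ω (imGenWord ω i him (l - m))) y := by
  rw [hB.2.2.2.2, deltaF_sw_singleton, deltaGen_gIm, Finsupp.sum_finsetSum_smul_single_one_mul_mul,
    Finset.sum_eq_single_of_mem m (Finset.mem_range.mpr (by omega)) fun t _ htm => by
      rw [pairing_imGenWord_gIm hB him t hm, if_neg htm, mul_zero, zero_mul],
    pairing_imGenWord_gIm hB him m hm, if_pos rfl]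

lemma pairing_imGenWord_Ecomp (hB : PairingAxioms ω e ν B) {i : I} (him : 1 ≤ ω i) :
    ∀ (c : List ℕ) (hc : ∀ k ∈ c, 1 ≤ k),
      B (sw ω (imGenWord ω i him c.sum)) (Ecomp ω i him c hc) =
        vq ^ ((1 - (ω i : ℤ)) * (crossSum c : ℤ)) *
          (c.attach.map fun j => ν (gIm ω i him j.1 (hc j.1 j.2))).prod
  | [], _ => by
    rw [List.sum_nil, imGenWord_zero, Ecomp_nil, sw_nil]
    simpa [crossSum] using hB.1
  | a :: c, hc => by
    have ha : 1 ≤ a := hc a List.mem_cons_self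
    have hsum : (a :: c).sum = a + c.sum := List.sum_cons
    rw [Ecomp_cons, imGenWord_of_pos ω i him (by omega : 1 ≤ (a :: c).sum),
      pairing_gIm_gIm_mul hB him _ ha (by omega), hsum, Nat.add_sub_cancel_left,
      pairing_imGenWord_Ecomp hB him c,
      List.prod_map_attach_cons a c fun k hk => ν (gIm ω i him k (hc k hk)), crossSum_cons]
    rw [Nat.cast_add, add_sub_cancel_left, Nat.cast_add, Nat.cast_mul, mul_add, ← mul_assoc,
      zpow_add₀ vq_ne_zero]
    ac_rfl

end PairingAxioms

theorem pairing_gen_comp_general {I : Type} [DecidableEq I]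
    (ω : I → ℕ) (e : I → I → ℤ)
    (ν : GenI ω → Kv) (B : FA ω →ₗ[Kv] FA ω →ₗ[Kv] Kv)
    (hB : PairingAxioms ω e ν B)
    (i : I) (him : 1 ≤ ω i) (c : List ℕ) (hc : ∀ k ∈ c, 1 ≤ k) (hsum : 1 ≤ c.sum) :
    B (sw ω [gIm ω i him c.sum hsum]) (Ecomp ω i him c hc) =
      vq ^ ((1 - (ω i : ℤ)) * (crossSum c : ℤ)) *
        (c.attach.map fun j => ν (gIm ω i him j.1 (hc j.1 j.2))).prod := by
  rw [← imGenWord_of_pos ω i him hsum]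
  exact hB.pairing_imGenWord_Ecomp him c hc

/-- `⟨E_{i,|c|}, E_{i,c}⟩ = v_i^{Σ_{k<j} c_k c_j} Π_j ν_{i,c_j}`
for an imaginary vertex `i` and a composition `c` (here `v_i = v^{1-ω i}`). -/
theorem pairing_gen_comp {I : Type} [DecidableEq I]
    (ω : I → ℕ) (e : I → I → ℤ) (hsym : ∀ i j, e i j = e j i)
    (hii : ∀ i, e i i = 2 - 2 * (ω i : ℤ))
    (ν : GenI ω → Kv) (B : FA ω →ₗ[Kv] FA ω →ₗ[Kv] Kv)
    (hB : PairingAxioms ω e ν B)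
    (i : I) (him : 1 ≤ ω i) (c : List ℕ) (hc : ∀ k ∈ c, 1 ≤ k) (hsum : 1 ≤ c.sum) :
    B (sw ω [gIm ω i him c.sum hsum]) (Ecomp ω i him c hc) =
      vq ^ ((1 - (ω i : ℤ)) * (crossSum c : ℤ)) *
        (c.attach.map fun j => ν (gIm ω i him j.1 (hc j.1 j.2))).prod :=
  pairing_gen_comp_general ω e ν B hB i him c hc hsum
end
end

section
/- The primitive elements a_{i,l} satisfy: ⟨a_{i,l}, a_{i,c}⟩ = δ_{(l),c} · τ_{i,l} for any composition c with |c| = l, where a_{i,c} = Π_j a_{i,c_j} and τ_{i,l} = ⟨a_{i,l}, a_{i,l}⟩. -/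
/- Setting for the generalized quantum group: `I` is the vertex set of a quiver with loops,
`ω i` the number of loops at `i` (`i` is real iff `ω i = 0`), `e` the symmetric Euler form
with `e i i = 2 - 2 ω i`.  `I_∞ = (I^re × {1}) ∪ (I^im × ℕ_{≥1})` is the set of generators,
`F` is the free `ℚ(v)`-algebra on the generators `E_{i,l}` (`(i,l) ∈ I_∞`), realized as the
monoid algebra of the free monoid on `I_∞`.  `F ⊗ F` carries the twisted multiplication
`(a⊗b)(c⊗d) = v^{(|b|,|c|)} ac ⊗ bd`, and `δ : F → F ⊗ F` is the algebra morphism with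
`δ(E_{i,l}) = Σ_{t+t'=l} v_i^{tt'} E_{i,t} ⊗ E_{i,t'}` (`v_i = v^{(i,i)/2} = v^{1-ω i}`). -/

open scoped Classical

noncomputable section
variable {I : Type} [DecidableEq I]

/-- The monomials of `F` supported on the vertex `i` and of weight `l·i`:
they span the graded piece `F[l·i]`. -/
def monomialsDeg (ω : I → ℕ) (i : I) (l : ℕ) : Set (FA ω) :=
  (fun w => sw ω w) ''
    {w : List (GenI ω) | (∀ g ∈ w, g.1.1 = i) ∧ (w.map fun g => g.1.2).sum = l}

/-- The subalgebra of `F` generated by the `E_{i,k}`, `1 ≤ k < l`. -/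
def lowerAlg (ω : I → ℕ) (i : I) (him : 1 ≤ ω i) (l : ℕ) : Subalgebra Kv (FA ω) :=
  Algebra.adjoin Kv {x : FA ω | ∃ k : ℕ, ∃ hk : 1 ≤ k, k < l ∧ x = sw ω [gIm ω i him k hk]}

theorem List.lt_sum_of_mem_of_ne_singleton {c : List ℕ} (hc : ∀ k ∈ c, 1 ≤ k)
    (hne : c ≠ [c.sum]) {k : ℕ} (hk : k ∈ c) : k < c.sum := by
  by_contra hge
  have hrest : (c.erase k).sum = 0 := by
    have := List.sum_erase hk
    omega
  have hnil : c.erase k = [] := List.eq_nil_iff_forall_not_mem.mpr fun x hx =>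
    Nat.one_le_iff_ne_zero.mp (hc x (List.mem_of_mem_erase hx))
      (List.sum_eq_zero_iff.mp hrest x hx)
  have hck : c = [k] := List.perm_singleton.mp (hnil ▸ List.perm_cons_erase hk)
  exact hne (by simp [hck])

section LowerAlgebra

variable {I : Type} {ω : I → ℕ} {i : I} {him : 1 ≤ ω i}

theorem lowerAlg_mono {k l : ℕ} (hkl : k ≤ l) : lowerAlg ω i him k ≤ lowerAlg ω i him l :=
  Algebra.adjoin_mono fun _ ⟨k', hk', hlt, hx⟩ => ⟨k', hk', hlt.trans_le hkl, hx⟩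

theorem sw_gIm_mem_lowerAlg {k l : ℕ} (hk : 1 ≤ k) (hkl : k < l) :
    sw ω [gIm ω i him k hk] ∈ lowerAlg ω i him l :=
  Algebra.subset_adjoin ⟨k, hk, hkl, rfl⟩

theorem mem_lowerAlg_of_sub_mem {x : FA ω} {k l : ℕ} (hk : 1 ≤ k) (hkl : k < l)
    (hx : x - sw ω [gIm ω i him k hk] ∈ lowerAlg ω i him k) : x ∈ lowerAlg ω i him l := by
  simpa using add_mem (lowerAlg_mono hkl.le hx) (sw_gIm_mem_lowerAlg hk hkl)

end LowerAlgebra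

theorem pairing_ail_comp_general {I : Type}
    (ω : I → ℕ)
    (B : FA ω →ₗ[Kv] FA ω →ₗ[Kv] Kv)
    (i : I) (him : 1 ≤ ω i)
    (a : ℕ → FA ω)
    (ha : ∀ l : ℕ, ∀ hl : 1 ≤ l,
      a l ∈ Submodule.span Kv (monomialsDeg ω i l) ∧
      a l - sw ω [gIm ω i him l hl] ∈ lowerAlg ω i him l ∧
      ∀ z ∈ lowerAlg ω i him l, B (a l) z = 0) :
    ∀ l : ℕ, 1 ≤ l → ∀ c : List ℕ, (∀ k ∈ c, 1 ≤ k) → c.sum = l →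
      B (a l) ((c.map a).prod) = if c = [l] then B (a l) (a l) else 0 := by
  rintro l hl c hc rfl
  split_ifs with hcl
  · rw [hcl]; simp
  refine (ha _ hl).2.2 _ (list_prod_mem ?_)
  intro x hx
  obtain ⟨k, hk, rfl⟩ := List.mem_map.mp hx
  exact mem_lowerAlg_of_sub_mem (hc k hk)
    (List.lt_sum_of_mem_of_ne_singleton hc hcl hk) (ha k (hc k hk)).2.1

/-- `⟨a_{i,l}, a_{i,c}⟩ = δ_{(l),c} · τ_{i,l}` for any composition `c` of `l`,
where `a_{i,c} = Π_j a_{i,c_j}` and `τ_{i,l} = ⟨a_{i,l}, a_{i,l}⟩`. -/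
theorem pairing_ail_comp {I : Type} [DecidableEq I]
    (ω : I → ℕ) (e : I → I → ℤ) (hsym : ∀ i j, e i j = e j i)
    (hii : ∀ i, e i i = 2 - 2 * (ω i : ℤ))
    (ν : GenI ω → Kv) (B : FA ω →ₗ[Kv] FA ω →ₗ[Kv] Kv)
    (hB : PairingAxioms ω e ν B)
    (i : I) (him : 1 ≤ ω i)
    (a : ℕ → FA ω)
    (ha : ∀ l : ℕ, ∀ hl : 1 ≤ l,
      a l ∈ Submodule.span Kv (monomialsDeg ω i l) ∧
      a l - sw ω [gIm ω i him l hl] ∈ lowerAlg ω i him l ∧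
      ∀ z ∈ lowerAlg ω i him l, B (a l) z = 0) :
    ∀ l : ℕ, 1 ≤ l → ∀ c : List ℕ, (∀ k ∈ c, 1 ≤ k) → c.sum = l →
      B (a l) ((c.map a).prod) = if c = [l] then B (a l) (a l) else 0 :=
  pairing_ail_comp_general ω B i him a ha
end
end
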